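/- arXiv:math/9902016 — 10 statements merged into one kernel-verified Lean document; each statement's English description precedes it below -/
import Mathlib

section
/- Let n ≥ 3 be an integer and let 0 ≤ r₁ < r₂ < ∞. For any C¹ function ξ : [r₁,r₂] → ℝ with ξ(r₂) = 0, it holds that ∫_{r₁}^{r₂} r^{n−1} ( ξ'(r)² − ((n−2)/2)² · ξ(r)²/r² ) dr ≥ 0, with equality if and only if ξ is identically zero. -/
/-!
Write `c = (n - 2) / 2`. For `r > 0` the integrand equals
`r^(n-3) (r ξ' + c ξ)² - c (r^(n-2) ξ²)'`, so integrating and using `ξ r₂ = 0` gives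
`∫ r^(n-1) (ξ'² - c² ξ²/r²) = ∫ r^(n-3) (r ξ' + c ξ)² + c r₁^(n-2) ξ(r₁)² ≥ 0`
(with `φ = r^c ξ` the remainder integrand is `r φ'²`).
If the integral vanishes then `r ξ' + c ξ = 0`, so `(r^(n-2) ξ²)' = 2 r^(n-3) ξ (r ξ' + c ξ)`
vanishes too; hence `r^(n-2) ξ² ≡ 0`, and `ξ = 0` on `(r₁, r₂]` and, by continuity, at `r₁`.
-/

open Set intervalIntegral MeasureTheory

theorem ContinuousOn.eqOn_zero_of_integral_eq_zero {f : ℝ → ℝ} {a b : ℝ} (hab : a < b)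
    (hf : ContinuousOn f (Icc a b)) (hf₀ : ∀ x ∈ Icc a b, 0 ≤ f x)
    (h : ∫ x in a..b, f x = 0) : EqOn f 0 (Icc a b) := by
  have hf₀' : 0 ≤ᵐ[volume.restrict (Ioc a b)] f :=
    ae_restrict_of_forall_mem measurableSet_Ioc fun x hx => hf₀ x (Ioc_subset_Icc_self hx)
  have hae := (integral_eq_zero_iff_of_le_of_nonneg_ae hab.le hf₀'
    (hf.intervalIntegrable_of_Icc hab.le)).1 h
  rw [Measure.restrict_congr_set Ioc_ae_eq_Icc] at hae
  refine Measure.eqOn_of_ae_eq hae hf continuousOn_const ?_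
  rw [interior_Icc, closure_Ioo hab.ne]

theorem constant_of_hasDerivAt_zero {g : ℝ → ℝ} {a b : ℝ}
    (hg : ContinuousOn g (Icc a b)) (hg' : ∀ x ∈ Ioo a b, HasDerivAt g 0 x) :
    ∀ x ∈ Icc a b, g x = g b := by
  intro x hx
  have := integral_eq_sub_of_hasDerivAt_of_le hx.2 (hg.mono (Icc_subset_Icc_left hx.1))
    (fun y hy => hg' y ⟨hx.1.trans_lt hy.1, hy.2⟩) intervalIntegrable_const
  rw [intervalIntegral.integral_zero] at this
  linarith

theorem hasDerivAt_pow_succ_mul_sq {ξ : ℝ → ℝ} {d x : ℝ} (m : ℕ) (h : HasDerivAt ξ d x) :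
    HasDerivAt (fun r => r ^ (m + 1) * ξ r ^ 2)
      (2 * x ^ m * ξ x * (x * d + (m + 1) / 2 * ξ x)) x := by
  refine ((hasDerivAt_pow (m + 1) x).fun_mul (h.fun_pow 2)).congr_deriv ?_
  simp only [add_tsub_cancel_right]
  push_cast
  ring

section Hardy

variable {a b : ℝ} {ξ ξ' : ℝ → ℝ} (m : ℕ)

theorem integral_hardy_eq (hab : a ≤ b) (hξ : ContinuousOn ξ (Icc a b))
    (hξ' : ContinuousOn ξ' (Icc a b)) (hderiv : ∀ x ∈ Ioo a b, HasDerivAt ξ (ξ' x) x) :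
    ∫ r in a..b, r ^ (m + 2) * (ξ' r ^ 2 - ((m + 1) / 2) ^ 2 * ξ r ^ 2 / r ^ 2) =
      (∫ r in a..b, r ^ m * (r * ξ' r + (m + 1) / 2 * ξ r) ^ 2) +
        (m + 1) / 2 * (a ^ (m + 1) * ξ a ^ 2 - b ^ (m + 1) * ξ b ^ 2) := by
  set c : ℝ := (m + 1) / 2
  have hFTC : ∫ r in a..b, 2 * r ^ m * ξ r * (r * ξ' r + c * ξ r) =
      b ^ (m + 1) * ξ b ^ 2 - a ^ (m + 1) * ξ a ^ 2 :=
    integral_eq_sub_of_hasDerivAt_of_le hab (by fun_prop)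
      (fun x hx => hasDerivAt_pow_succ_mul_sq m (hderiv x hx))
      (ContinuousOn.intervalIntegrable_of_Icc hab (by fun_prop))
  -- `r² ξ'² - c² ξ² = (r ξ' + c ξ) (r ξ' + c ξ - 2 c ξ)`
  have hpointwise : ∀ r : ℝ, r ≠ 0 →
      r ^ (m + 2) * (ξ' r ^ 2 - c ^ 2 * ξ r ^ 2 / r ^ 2) =
        r ^ m * (r * ξ' r + c * ξ r) ^ 2 - c * (2 * r ^ m * ξ r * (r * ξ' r + c * ξ r)) := by
    intro r hr
    field_simp
    ring
  rw [integral_congr_ae ((volume.ae_ne 0).mono fun r hr _ => hpointwise r hr),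
    intervalIntegral.integral_sub, intervalIntegral.integral_const_mul, hFTC]
  · ring
  · exact ContinuousOn.intervalIntegrable_of_Icc hab (by fun_prop)
  · exact ContinuousOn.intervalIntegrable_of_Icc hab (by fun_prop)

theorem eqOn_zero_of_integral_hardy_remainder_eq_zero (ha : 0 ≤ a) (hab : a < b)
    (hξ : ContinuousOn ξ (Icc a b)) (hξ' : ContinuousOn ξ' (Icc a b))
    (hderiv : ∀ x ∈ Ioo a b, HasDerivAt ξ (ξ' x) x) (hb : ξ b = 0)
    (h : ∫ r in a..b, r ^ m * (r * ξ' r + (m + 1) / 2 * ξ r) ^ 2 = 0) :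
    EqOn ξ 0 (Icc a b) := by
  set c : ℝ := (m + 1) / 2
  have hrem : EqOn (fun r => r ^ m * (r * ξ' r + c * ξ r) ^ 2) 0 (Icc a b) :=
    ContinuousOn.eqOn_zero_of_integral_eq_zero hab (by fun_prop)
      (fun r hr => mul_nonneg (pow_nonneg (ha.trans hr.1) m) (sq_nonneg _)) h
  have hg : ∀ x ∈ Icc a b, x ^ (m + 1) * ξ x ^ 2 = 0 := by
    intro x hx
    refine (constant_of_hasDerivAt_zero (g := fun r => r ^ (m + 1) * ξ r ^ 2)
      (by fun_prop) (fun y hy => ?_) x hx).trans (by simp [hb])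
    have hy0 : y ^ m * (y * ξ' y + c * ξ y) ^ 2 = 0 := hrem (Ioo_subset_Icc_self hy)
    have hsq : (y ^ m * (y * ξ' y + c * ξ y)) ^ 2 = 0 := by linear_combination y ^ m * hy0
    convert hasDerivAt_pow_succ_mul_sq m (hderiv y hy) using 1
    linear_combination -2 * ξ y * (pow_eq_zero_iff two_ne_zero |>.1 hsq)
  refine EqOn.of_subset_closure (s := Ioc a b) (fun x hx => ?_) hξ continuousOn_const
    Ioc_subset_Icc_self (by rw [closure_Ioc hab.ne])
  simpa [(ha.trans_lt hx.1).ne'] using hg x (Ioc_subset_Icc_self hx)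

end Hardy

/-- Lemma 1: the weighted Hardy-type inequality
`∫_{r₁}^{r₂} r^{n-1} (ξ'² - ((n-2)/2)² ξ²/r²) dr ≥ 0` for `n ≥ 3`,
`0 ≤ r₁ < r₂` and `ξ` of class `C¹` on `[r₁, r₂]` with `ξ(r₂) = 0`,
with equality if and only if `ξ` vanishes identically on `[r₁, r₂]`. -/
theorem weighted_hardy_inequality
    {n : ℕ} (hn : 3 ≤ n) (r₁ r₂ : ℝ) (hr₁ : 0 ≤ r₁) (hr : r₁ < r₂)
    (ξ : ℝ → ℝ) (hξ : ContDiffOn ℝ 1 ξ (Icc r₁ r₂)) (hξ2 : ξ r₂ = 0) :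
    0 ≤ (∫ r in r₁..r₂, r ^ (n - 1) *
        ((derivWithin ξ (Icc r₁ r₂) r) ^ 2 -
          (((n : ℝ) - 2) / 2) ^ 2 * (ξ r) ^ 2 / r ^ 2)) ∧
      ((∫ r in r₁..r₂, r ^ (n - 1) *
          ((derivWithin ξ (Icc r₁ r₂) r) ^ 2 -
            (((n : ℝ) - 2) / 2) ^ 2 * (ξ r) ^ 2 / r ^ 2)) = 0 ↔
        ∀ r ∈ Icc r₁ r₂, ξ r = 0) := by
  obtain ⟨m, rfl⟩ : ∃ m, n = m + 3 := ⟨n - 3, by omega⟩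
  have hc : ((↑(m + 3) : ℝ) - 2) / 2 = (m + 1) / 2 := by push_cast; ring
  set ξ' := derivWithin ξ (Icc r₁ r₂)
  have hξc : ContinuousOn ξ (Icc r₁ r₂) := hξ.continuousOn
  have hξ'c : ContinuousOn ξ' (Icc r₁ r₂) :=
    hξ.continuousOn_derivWithin (uniqueDiffOn_Icc hr) le_rfl
  have hderiv : ∀ x ∈ Ioo r₁ r₂, HasDerivAt ξ (ξ' x) x := fun x hx =>
    ((hξ.differentiableOn one_ne_zero x (Ioo_subset_Icc_self hx)).hasDerivWithinAt).hasDerivAt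
      (Icc_mem_nhds hx.1 hx.2)
  rw [show m + 3 - 1 = m + 2 from rfl, hc, integral_hardy_eq m hr.le hξc hξ'c hderiv, hξ2]
  have hrem : 0 ≤ ∫ r in r₁..r₂, r ^ m * (r * ξ' r + (m + 1) / 2 * ξ r) ^ 2 :=
    integral_nonneg hr.le fun x hx => mul_nonneg (pow_nonneg (hr₁.trans hx.1) m) (sq_nonneg _)
  have hbdry : 0 ≤ ((m : ℝ) + 1) / 2 * (r₁ ^ (m + 1) * ξ r₁ ^ 2) := by positivity
  refine ⟨by simpa using add_nonneg hrem hbdry, fun h => ?_, fun h => ?_⟩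
  · simp only [zero_pow two_ne_zero, mul_zero, sub_zero] at h
    exact eqOn_zero_of_integral_hardy_remainder_eq_zero m hr₁ hr hξc hξ'c hderiv hξ2
      (by linarith)
  · have hξ'0 : EqOn ξ' 0 (Icc r₁ r₂) := fun x hx =>
      (derivWithin_congr h (h x hx)).trans (by simp)
    have hrem0 : ∫ r in r₁..r₂, r ^ m * (r * ξ' r + (m + 1) / 2 * ξ r) ^ 2 = 0 := by
      refine (integral_congr fun x hx => ?_).trans integral_zero
      rw [uIcc_of_le hr.le] at hx
      simp [h x hx, hξ'0 hx]
    simp [hrem0, h r₁ (left_mem_Icc.2 hr.le)]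
end

section
/- Let n ≥ 3, let Ω ⊆ ℝⁿ be a bounded open set, let x₀ ∈ ℝⁿ, and let c : Ω → ℝ be a function satisfying c(x) ≤ ((n−2)/2)²/‖x−x₀‖² for all x ∈ Ω with x ≠ x₀. If ξ is a C² function on the closure of Ω satisfying the linearised equation Δξ(x) + c(x)ξ(x) = 0 on Ω and ξ = 0 on ∂Ω, then ξ is identically zero on Ω. -/
open Set

/-- The Laplacian of a real-valued function on Euclidean space,
`Δu(x) = ∑ i, ∂²u/∂xᵢ²(x)`. -/
noncomputable def lap {n : ℕ} (u : EuclideanSpace ℝ (Fin n) → ℝ)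
    (x : EuclideanSpace ℝ (Fin n)) : ℝ :=
  ∑ i : Fin n, fderiv ℝ (fun y => fderiv ℝ u y (EuclideanSpace.single i 1)) x
    (EuclideanSpace.single i 1)

/-!
With `α = (n - 2) / 2`, the function `‖x - x₀‖ ^ (-α)` solves `Δρ + α² ρ / ‖x - x₀‖² = 0` away
from `x₀`, so `ψ = K ‖x - x₀‖ ^ (-α) - 1` is a strict supersolution of `Δψ + c ψ ≤ 0`, and it is
positive on `Ω̄` for `K` large. If a subsolution `ξ` (`Δξ + c ξ ≥ 0`, `ξ ≤ 0` on `∂Ω`) were positive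
somewhere, maximize `ξ / ψ` over `Ω̄`: since `ψ` blows up at `x₀` the maximum `M > 0` is attained at
some `q ∈ Ω`, `q ≠ x₀`, where `ξ - M ψ` has a local maximum `0`. There `Δξ ≤ M Δψ`, hence
`0 ≤ Δξ + c ξ ≤ M (Δψ + c ψ) < 0`. Applying this to `ξ` and `-ξ` gives `ξ = 0`.
-/

open Filter Topology Laplacian InnerProductSpace Module

theorem deriv_deriv_nonpos_of_isLocalMax {h : ℝ → ℝ} {a : ℝ} (hmax : IsLocalMax h a)
    (hc : ContinuousAt h a) : deriv (deriv h) a ≤ 0 := by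
  by_contra! hpos
  have hmin := isLocalMin_of_deriv_deriv_pos hpos hmax.deriv_eq_zero hc
  have hconst : deriv h =ᶠ[𝓝 a] fun _ => 0 := by
    have : h =ᶠ[𝓝 a] fun _ => h a := by
      filter_upwards [hmin, hmax] with x h₁ h₂ using le_antisymm h₂ h₁
    filter_upwards [this.eventuallyEq_nhds] with x hx
    rw [hx.deriv_eq, deriv_const]
  rw [hconst.deriv_eq, deriv_const] at hpos
  exact hpos.false

theorem sq_rpow_div_two {x : ℝ} (hx : 0 ≤ x) (s : ℝ) : (x ^ 2) ^ (s / 2) = x ^ s := by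
  rw [← Real.rpow_natCast, ← Real.rpow_mul hx]
  congr 1
  push_cast
  ring

theorem IsCompact.exists_mem_isMaxOn_mul {X : Type*} [TopologicalSpace X] {Ω : Set X}
    (hΩ : IsCompact (closure Ω)) {ξ φ : X → ℝ} (hξ : ContinuousOn ξ (closure Ω))
    (hφ : ContinuousOn φ (closure Ω)) (hφ0 : ∀ y ∈ closure Ω, 0 ≤ φ y)
    (hbd : ∀ y ∈ frontier Ω, ξ y ≤ 0) {a : X} (ha : a ∈ Ω) (hpos : 0 < ξ a * φ a) :
    ∃ q ∈ Ω, 0 < ξ q ∧ 0 < φ q ∧ IsMaxOn (fun y => ξ y * φ y) (closure Ω) q := by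
  obtain ⟨q, hq, hmax⟩ := hΩ.exists_isMaxOn ⟨a, subset_closure ha⟩ (hξ.mul hφ)
  have hqpos : 0 < ξ q * φ q := hpos.trans_le (hmax (subset_closure ha))
  have hφq : 0 < φ q := (hφ0 q hq).lt_of_ne fun h => by simp [← h] at hqpos
  have hξq : 0 < ξ q := pos_of_mul_pos_left hqpos hφq.le
  have hqΩ : q ∈ interior Ω := by
    by_contra h
    exact (hbd q ⟨hq, h⟩).not_gt hξq
  exact ⟨q, interior_subset hqΩ, hξq, hφq, hmax⟩

section NormedSpace

variable {E F : Type*} [NormedAddCommGroup E] [NormedSpace ℝ E] [NormedAddCommGroup F]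
  [NormedSpace ℝ F]

theorem HasFDerivAt.hasDerivAt_comp_add_smul {f : E → F} {f' : E →L[ℝ] F} {p e : E} {t : ℝ}
    (hf : HasFDerivAt f f' (p + t • e)) : HasDerivAt (fun s : ℝ => f (p + s • e)) (f' e) t := by
  refine hf.comp_hasDerivAt t ?_
  simpa using ((hasDerivAt_id t).smul_const e).const_add p

theorem fderiv_fderiv_apply_nonpos_of_isLocalMax {g : E → ℝ} {p : E} (hg : ContDiffAt ℝ 2 g p)
    (hmax : IsLocalMax g p) (e : E) : fderiv ℝ (fun y => fderiv ℝ g y e) p e ≤ 0 := by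
  have hline : Continuous fun s : ℝ => p + s • e := by fun_prop
  have hline0 : Tendsto (fun s : ℝ => p + s • e) (𝓝 0) (𝓝 p) := hline.tendsto' 0 p (by simp)
  have hfirst : deriv (fun s : ℝ => g (p + s • e)) =ᶠ[𝓝 0]
      fun s => fderiv ℝ g (p + s • e) e := by
    have : ∀ᶠ y in 𝓝 p, DifferentiableAt ℝ g y :=
      (hg.eventually (by simp)).mono fun y hy => hy.differentiableAt (by simp)
    filter_upwards [hline0.eventually this] with s hs
    exact hs.hasFDerivAt.hasDerivAt_comp_add_smul.deriv
  have hsecond : HasDerivAt (fun s : ℝ => fderiv ℝ g (p + s • e) e)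
      (fderiv ℝ (fun y => fderiv ℝ g y e) p e) 0 := by
    have : DifferentiableAt ℝ (fun y => fderiv ℝ g y e) p :=
      ((hg.fderiv_right (m := 1) (by norm_num)).differentiableAt one_ne_zero).clm_apply
        (differentiableAt_const e)
    exact HasFDerivAt.hasDerivAt_comp_add_smul (f := fun y => fderiv ℝ g y e)
      (by simpa using this.hasFDerivAt)
  rw [← hsecond.deriv, ← hfirst.deriv_eq]
  exact deriv_deriv_nonpos_of_isLocalMax
    (IsLocalMax.comp_continuous (g := fun s : ℝ => p + s • e) (by simpa using hmax)
      hline.continuousAt)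
    (hg.continuousAt.comp_of_eq hline.continuousAt (by simp))

end NormedSpace

section InnerProductSpace

variable {E : Type*} [NormedAddCommGroup E] [InnerProductSpace ℝ E]

theorem hasFDerivAt_norm_sub_rpow (x₀ : E) (s : ℝ) {y : E} (hy : y ≠ x₀) :
    HasFDerivAt (fun z => ‖z - x₀‖ ^ s) ((s * ‖y - x₀‖ ^ (s - 2)) • innerSL ℝ (y - x₀)) y := by
  have hr : 0 < ‖y - x₀‖ := norm_sub_pos_iff.mpr hy
  have hexp : (‖y - x₀‖ ^ 2) ^ (s / 2 - 1) = ‖y - x₀‖ ^ (s - 2) := by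
    rw [← sq_rpow_div_two hr.le]
    ring_nf
  simp_rw [← sq_rpow_div_two (norm_nonneg _) s]
  refine (((hasFDerivAt_id y).sub_const x₀).norm_sq.rpow_const (p := s / 2)
    (Or.inl (by positivity))).congr_fderiv ?_
  ext v
  simp only [id, hexp, smul_apply, ContinuousLinearMap.comp_apply, ContinuousLinearMap.id_apply,
    smul_eq_mul, nsmul_eq_mul]
  ring

theorem contDiffAt_norm_sub_rpow (x₀ : E) (s : ℝ) {y : E} (hy : y ≠ x₀) {k : WithTop ℕ∞} :
    ContDiffAt ℝ k (fun z => ‖z - x₀‖ ^ s) y :=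
  ((contDiffAt_id.sub contDiffAt_const).norm ℝ (sub_ne_zero.mpr hy)).rpow_const_of_ne
    (norm_sub_pos_iff.mpr hy).ne'

variable (E) in
/-- The exponent `α = (n - 2) / 2` of the Hardy ground state `‖x‖ ^ (-α)` in dimension `n`;
`α²` is the sharp constant in Hardy's inequality. -/
noncomputable def hardyExponent : ℝ := ((finrank ℝ E : ℝ) - 2) / 2

noncomputable def hardyBarrier (x₀ : E) (K : ℝ) (y : E) : ℝ :=
  K * ‖y - x₀‖ ^ (-hardyExponent E) - 1

theorem contDiffAt_hardyBarrier (x₀ : E) (K : ℝ) {y : E} (hy : y ≠ x₀) {k : WithTop ℕ∞} :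
    ContDiffAt ℝ k (hardyBarrier x₀ K) y :=
  (contDiffAt_const.mul (contDiffAt_norm_sub_rpow x₀ _ hy)).sub contDiffAt_const

theorem hardyBarrier_mul_eq_one {x₀ y : E} {K : ℝ} (hy : y ≠ x₀)
    (hK : ‖y - x₀‖ ^ hardyExponent E < K) :
    ‖y - x₀‖ ^ hardyExponent E / (K - ‖y - x₀‖ ^ hardyExponent E) * hardyBarrier x₀ K y = 1 := by
  have hu : 0 < ‖y - x₀‖ ^ hardyExponent E := Real.rpow_pos_of_pos (norm_sub_pos_iff.mpr hy) _
  rw [hardyBarrier, Real.rpow_neg (norm_nonneg _)]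
  field_simp [(sub_pos.mpr hK).ne']

variable [FiniteDimensional ℝ E]

theorem laplacian_eq_sum_fderiv_fderiv_apply {F ι : Type*} [NormedAddCommGroup F]
    [NormedSpace ℝ F] [Fintype ι] {f : E → F} {x : E} (hf : ContDiffAt ℝ 2 f x)
    (v : OrthonormalBasis ι ℝ E) :
    Δ f x = ∑ i, fderiv ℝ (fun y => fderiv ℝ f y (v i)) x (v i) := by
  have hd : DifferentiableAt ℝ (fderiv ℝ f) x :=
    (hf.fderiv_right (m := 1) (by norm_num)).differentiableAt one_ne_zero
  rw [laplacian_eq_iteratedFDeriv_orthonormalBasis f v]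
  refine Finset.sum_congr rfl fun i _ => ?_
  rw [iteratedFDeriv_two_apply, fderiv_clm_apply hd (differentiableAt_const _)]
  simp

theorem laplacian_nonpos_of_isLocalMax {g : E → ℝ} {p : E} (hg : ContDiffAt ℝ 2 g p)
    (hmax : IsLocalMax g p) : Δ g p ≤ 0 := by
  rw [laplacian_eq_sum_fderiv_fderiv_apply hg (stdOrthonormalBasis ℝ E)]
  exact Finset.sum_nonpos fun i _ => fderiv_fderiv_apply_nonpos_of_isLocalMax hg hmax _

theorem laplacian_add_mul_le_of_isLocalMax_sub {ξ ψ : E → ℝ} {q : E} {M : ℝ}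
    (hξ : ContDiffAt ℝ 2 ξ q) (hψ : ContDiffAt ℝ 2 ψ q)
    (hmax : IsLocalMax (fun y => ξ y - M * ψ y) q) (htouch : ξ q = M * ψ q) (c : ℝ) :
    Δ ξ q + c * ξ q ≤ M * (Δ ψ q + c * ψ q) := by
  have hMψ : ContDiffAt ℝ 2 (M • ψ) q := hψ.const_smul M
  have h := laplacian_nonpos_of_isLocalMax (g := ξ - M • ψ) (hξ.sub hMψ) hmax
  rw [hξ.laplacian_sub hMψ, laplacian_smul M hψ, smul_eq_mul] at h
  rw [htouch]
  linarith

theorem laplacian_norm_sub_rpow (x₀ : E) (s : ℝ) {y : E} (hy : y ≠ x₀) :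
    Δ (fun z => ‖z - x₀‖ ^ s) y = s * (s + finrank ℝ E - 2) * ‖y - x₀‖ ^ (s - 2) := by
  set b := stdOrthonormalBasis ℝ E
  have hr : 0 < ‖y - x₀‖ := norm_sub_pos_iff.mpr hy
  have hfirst : ∀ e : E, (fun z => fderiv ℝ (fun z => ‖z - x₀‖ ^ s) z e) =ᶠ[𝓝 y]
      fun z => s * (‖z - x₀‖ ^ (s - 2) * inner ℝ (z - x₀) e) := by
    intro e
    filter_upwards [isOpen_ne.mem_nhds hy] with z hz
    rw [(hasFDerivAt_norm_sub_rpow x₀ s hz).fderiv]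
    simp [mul_assoc, inner_sub_left]
  have hsecond : ∀ e : E, HasFDerivAt (fun z => s * (‖z - x₀‖ ^ (s - 2) * inner ℝ (z - x₀) e))
      (s • (‖y - x₀‖ ^ (s - 2) • innerSL ℝ e +
        inner ℝ (y - x₀) e • (((s - 2) * ‖y - x₀‖ ^ (s - 2 - 2)) • innerSL ℝ (y - x₀)))) y := by
    intro e
    have hlin : HasFDerivAt (fun z => inner ℝ (z - x₀) e) (innerSL ℝ e) y := by
      simpa [Function.comp_def, real_inner_comm e] using
        (innerSL ℝ e).hasFDerivAt.comp y ((hasFDerivAt_id y).sub_const x₀)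
    exact ((hasFDerivAt_norm_sub_rpow x₀ (s - 2) hy).mul hlin).const_mul s
  have hterm : ∀ i, fderiv ℝ (fun z => fderiv ℝ (fun z => ‖z - x₀‖ ^ s) z (b i)) y (b i) =
      s * ‖y - x₀‖ ^ (s - 2) + s * (s - 2) * ‖y - x₀‖ ^ (s - 2 - 2) *
        (inner ℝ (y - x₀) (b i) * inner ℝ (b i) (y - x₀)) := by
    intro i
    rw [(hfirst (b i)).fderiv_eq, (hsecond (b i)).fderiv]
    simp only [add_apply, smul_apply, innerSL_apply_apply, smul_eq_mul,
      real_inner_self_eq_norm_sq, b.norm_eq_one, real_inner_comm (y - x₀)]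
    ring
  have hpow : ‖y - x₀‖ ^ (s - 2 - 2) * ‖y - x₀‖ ^ 2 = ‖y - x₀‖ ^ (s - 2) := by
    rw [← Real.rpow_natCast, ← Real.rpow_add hr]
    norm_num
  rw [laplacian_eq_sum_fderiv_fderiv_apply (contDiffAt_norm_sub_rpow x₀ s hy) b,
    Finset.sum_congr rfl fun i _ => hterm i, Finset.sum_add_distrib, Finset.sum_const,
    ← Finset.mul_sum, b.sum_inner_mul_inner, real_inner_self_eq_norm_sq, Finset.card_univ,
    Fintype.card_fin, nsmul_eq_mul]
  linear_combination s * (s - 2) * hpow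

theorem laplacian_hardyBarrier (x₀ : E) (K : ℝ) {y : E} (hy : y ≠ x₀) :
    Δ (hardyBarrier x₀ K) y =
      -hardyExponent E ^ 2 * (hardyBarrier x₀ K y + 1) / ‖y - x₀‖ ^ 2 := by
  have hr : 0 < ‖y - x₀‖ := norm_sub_pos_iff.mpr hy
  set ρ : E → ℝ := fun z => ‖z - x₀‖ ^ (-hardyExponent E)
  have hρ : ContDiffAt ℝ 2 ρ y := contDiffAt_norm_sub_rpow x₀ _ hy
  have hKρ : ContDiffAt ℝ 2 (K • ρ) y := hρ.const_smul K
  have hΔ : Δ (hardyBarrier x₀ K) y = K * Δ ρ y := by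
    rw [show hardyBarrier x₀ K = K • ρ - fun _ => 1 from rfl,
      hKρ.laplacian_sub contDiffAt_const, laplacian_smul K hρ]
    simp
  have hdim : (finrank ℝ E : ℝ) - 2 = 2 * hardyExponent E := by
    rw [hardyExponent]
    ring
  have hpow : ‖y - x₀‖ ^ (-hardyExponent E - 2) =
      ‖y - x₀‖ ^ (-hardyExponent E) / ‖y - x₀‖ ^ 2 := by
    rw [Real.rpow_sub hr, Real.rpow_two]
  rw [hΔ, laplacian_norm_sub_rpow x₀ _ hy, hpow, hardyBarrier, add_sub_assoc, hdim]
  ring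

theorem laplacian_hardyBarrier_add_mul_neg (hα : hardyExponent E ≠ 0) {x₀ y : E} {K c : ℝ}
    (hy : y ≠ x₀) (hc : c ≤ hardyExponent E ^ 2 / ‖y - x₀‖ ^ 2) (hψ : 0 < hardyBarrier x₀ K y) :
    Δ (hardyBarrier x₀ K) y + c * hardyBarrier x₀ K y < 0 := by
  have hr : 0 < ‖y - x₀‖ ^ 2 := pow_pos (norm_sub_pos_iff.mpr hy) 2
  calc Δ (hardyBarrier x₀ K) y + c * hardyBarrier x₀ K y
      ≤ Δ (hardyBarrier x₀ K) y + hardyExponent E ^ 2 / ‖y - x₀‖ ^ 2 * hardyBarrier x₀ K y := by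
        gcongr
    _ = -(hardyExponent E ^ 2 / ‖y - x₀‖ ^ 2) := by
        rw [laplacian_hardyBarrier x₀ K hy]
        ring
    _ < 0 := neg_neg_of_pos (by positivity)

theorem exists_isLocalMax_sub_mul_hardyBarrier (hα : 0 < hardyExponent E) {Ω : Set E}
    (hΩo : IsOpen Ω) (hΩb : Bornology.IsBounded Ω) (x₀ : E) {ξ : E → ℝ}
    (hξ : ContinuousOn ξ (closure Ω)) (hbd : ∀ x ∈ frontier Ω, ξ x ≤ 0) {b : E} (hbΩ : b ∈ Ω)
    (hbx₀ : b ≠ x₀) (hξb : 0 < ξ b) :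
    ∃ K, ∃ q ∈ Ω, q ≠ x₀ ∧ ∃ M > 0, 0 < hardyBarrier x₀ K q ∧ ξ q = M * hardyBarrier x₀ K q ∧
      IsLocalMax (fun y => ξ y - M * hardyBarrier x₀ K y) q := by
  set u : E → ℝ := fun y => ‖y - x₀‖ ^ hardyExponent E
  have hu : Continuous u :=
    (by fun_prop : Continuous fun y => ‖y - x₀‖).rpow_const fun _ => Or.inr hα.le
  obtain ⟨B, hB⟩ := hΩb.isCompact_closure.exists_bound_of_continuousOn hu.continuousOn
  set K := B + 1
  have huK : ∀ y ∈ closure Ω, u y < K := fun y hy =>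
    (le_abs_self _).trans_lt (by linarith [hB y hy, Real.norm_eq_abs (u y)])
  -- `φ = 1 / ψ` away from `x₀`, extended continuously by `φ x₀ = 0`
  set φ : E → ℝ := fun y => u y / (K - u y)
  have hφc : ContinuousOn φ (closure Ω) := hu.continuousOn.div
    (continuousOn_const.sub hu.continuousOn) fun y hy => (sub_pos.mpr (huK y hy)).ne'
  have hφ0 : ∀ y ∈ closure Ω, 0 ≤ φ y := fun y hy =>
    div_nonneg (Real.rpow_nonneg (norm_nonneg _) _) (sub_pos.mpr (huK y hy)).le
  have hφψ : ∀ y ∈ closure Ω, y ≠ x₀ → φ y * hardyBarrier x₀ K y = 1 := fun y hy hyx₀ =>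
    hardyBarrier_mul_eq_one hyx₀ (huK y hy)
  have hψ : ∀ y ∈ closure Ω, y ≠ x₀ → 0 < hardyBarrier x₀ K y := fun y hy hyx₀ =>
    pos_of_mul_pos_right (by rw [hφψ y hy hyx₀]; exact one_pos) (hφ0 y hy)
  have hφb : 0 < φ b := pos_of_mul_pos_left (by rw [hφψ b (subset_closure hbΩ) hbx₀]; exact one_pos)
    (hψ b (subset_closure hbΩ) hbx₀).le
  obtain ⟨q, hqΩ, hξq, hφq, hmax⟩ :=
    hΩb.isCompact_closure.exists_mem_isMaxOn_mul hξ hφc hφ0 hbd hbΩ (mul_pos hξb hφb)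
  have hqx₀ : q ≠ x₀ := by
    rintro rfl
    simp [φ, u, Real.zero_rpow hα.ne'] at hφq
  have htouch : ξ q = ξ q * φ q * hardyBarrier x₀ K q := by
    rw [mul_assoc, hφψ q (subset_closure hqΩ) hqx₀, mul_one]
  refine ⟨K, q, hqΩ, hqx₀, ξ q * φ q, mul_pos hξq hφq, hψ q (subset_closure hqΩ) hqx₀, htouch, ?_⟩
  filter_upwards [(hΩo.inter isOpen_ne).mem_nhds ⟨hqΩ, hqx₀⟩] with y ⟨hyΩ, hyx₀⟩
  have hle := mul_le_mul_of_nonneg_right (hmax (subset_closure hyΩ))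
    (hψ y (subset_closure hyΩ) hyx₀).le
  rw [mul_assoc, hφψ y (subset_closure hyΩ) hyx₀, mul_one] at hle
  linarith

theorem nonpos_of_laplacian_add_mul_nonneg (hn : 3 ≤ finrank ℝ E) {Ω : Set E} (hΩo : IsOpen Ω)
    (hΩb : Bornology.IsBounded Ω) {x₀ : E} {c : E → ℝ}
    (hc : ∀ x ∈ Ω, x ≠ x₀ → c x ≤ hardyExponent E ^ 2 / ‖x - x₀‖ ^ 2) {ξ : E → ℝ}
    (hξc : ContinuousOn ξ (closure Ω)) (hξd : ∀ x ∈ Ω, ContDiffAt ℝ 2 ξ x)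
    (hsub : ∀ x ∈ Ω, 0 ≤ Δ ξ x + c x * ξ x) (hbd : ∀ x ∈ frontier Ω, ξ x ≤ 0) :
    ∀ x ∈ Ω, ξ x ≤ 0 := by
  intro a ha
  by_contra! hξa
  have : Nontrivial E := Module.nontrivial_of_finrank_pos (R := ℝ) (by omega)
  obtain ⟨b, ⟨hbΩ, hξb⟩, hbx₀⟩ : (Ω ∩ ξ ⁻¹' Ioi 0 ∩ {x₀}ᶜ).Nonempty :=
    (dense_compl_singleton x₀).inter_open_nonempty _
      ((hξc.mono subset_closure).isOpen_inter_preimage hΩo isOpen_Ioi) ⟨a, ha, hξa⟩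
  have hα : 0 < hardyExponent E := by
    have : (3 : ℝ) ≤ finrank ℝ E := by exact_mod_cast hn
    rw [hardyExponent]
    linarith
  obtain ⟨K, q, hqΩ, hqx₀, M, hM, hψq, htouch, hmax⟩ :=
    exists_isLocalMax_sub_mul_hardyBarrier hα hΩo hΩb x₀ hξc hbd hbΩ hbx₀ hξb
  have hcomp := laplacian_add_mul_le_of_isLocalMax_sub (hξd q hqΩ)
    (contDiffAt_hardyBarrier x₀ K hqx₀) hmax htouch (c q)
  have hsuper := laplacian_hardyBarrier_add_mul_neg hα.ne' hqx₀ (hc q hqΩ hqx₀) hψq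
  linarith [hsub q hqΩ, mul_neg_of_pos_of_neg hM hsuper]

end InnerProductSpace

theorem lap_eq_laplacian {n : ℕ} {u : EuclideanSpace ℝ (Fin n) → ℝ}
    {x : EuclideanSpace ℝ (Fin n)} (hu : ContDiffAt ℝ 2 u x) : lap u x = Δ u x := by
  rw [laplacian_eq_sum_fderiv_fderiv_apply hu (EuclideanSpace.basisFun (Fin n) ℝ), lap]
  simp

/-- Non-degeneracy of the linearised Dirichlet problem: for `n ≥ 3` and a potential
`c` with `c(x) ≤ ((n-2)/2)²/‖x-x₀‖²`, the only solution of `Δξ + cξ = 0` on a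
bounded open set `Ω` with `ξ = 0` on `∂Ω` is `ξ ≡ 0`. -/
theorem linearised_dirichlet_nondegenerate
    {n : ℕ} (hn : 3 ≤ n)
    (Ω : Set (EuclideanSpace ℝ (Fin n))) (hΩo : IsOpen Ω) (hΩb : Bornology.IsBounded Ω)
    (x₀ : EuclideanSpace ℝ (Fin n)) (c : EuclideanSpace ℝ (Fin n) → ℝ)
    (hc : ∀ x ∈ Ω, x ≠ x₀ → c x ≤ (((n : ℝ) - 2) / 2) ^ 2 / ‖x - x₀‖ ^ 2)
    (ξ : EuclideanSpace ℝ (Fin n) → ℝ) (hξ : ContDiffOn ℝ 2 ξ (closure Ω))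
    (heq : ∀ x ∈ Ω, lap ξ x + c x * ξ x = 0)
    (hbd : ∀ x ∈ frontier Ω, ξ x = 0) :
    ∀ x ∈ Ω, ξ x = 0 := by
  have hdim : finrank ℝ (EuclideanSpace ℝ (Fin n)) = n := finrank_euclideanSpace_fin
  have hsmooth : ∀ x ∈ Ω, ContDiffAt ℝ 2 ξ x := fun x hx =>
    hξ.contDiffAt (mem_of_superset (hΩo.mem_nhds hx) subset_closure)
  have hΔ : ∀ x ∈ Ω, Δ ξ x + c x * ξ x = 0 := fun x hx => by
    rw [← lap_eq_laplacian (hsmooth x hx), heq x hx]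
  have hc' : ∀ x ∈ Ω, x ≠ x₀ →
      c x ≤ hardyExponent (EuclideanSpace ℝ (Fin n)) ^ 2 / ‖x - x₀‖ ^ 2 := by
    simpa [hardyExponent, hdim] using hc
  have hle := nonpos_of_laplacian_add_mul_nonneg (hn.trans hdim.ge) hΩo hΩb hc' hξ.continuousOn
    hsmooth (fun x hx => (hΔ x hx).ge) fun x hx => (hbd x hx).le
  have hge := nonpos_of_laplacian_add_mul_nonneg (hn.trans hdim.ge) hΩo hΩb hc'
    hξ.continuousOn.neg (fun x hx => (hsmooth x hx).neg)
    (fun x hx => by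
      rw [congrFun laplacian_neg x, Pi.neg_apply, Pi.neg_apply]
      linarith [hΔ x hx])
    fun x hx => by simp [hbd x hx]
  exact fun x hx => le_antisymm (hle x hx) (neg_nonpos.mp (hge x hx))
end

section
/- Let n ≥ 3 and let V : ℝ × (0,∞) → ℝ be a C² compactly supported radial potential, supported in {(u,r) : r ≤ R}, satisfying ∂²V/∂u²(u,r) ≤ 1/(4r²) for all (u,r). Fix A ∈ ℝ, and let u₁, u₂ : (0,∞) → ℝ be solutions of u''(r) + ((n−1)/r)·u'(r) + ∂V/∂u(u(r),r) = 0 such that u₁(r) = α₁/r^{n−2} + A and u₂(r) = α₂/r^{n−2} + A for all r ≥ R, where α₁ < α₂. Then u₁(r) < u₂(r) for every r > 0; that is, the family N_A of such solutions is totally ordered and their graphs are pairwise disjoint. -/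
/-!
Let `w = u₂ - u₁`; it equals `(α₂ - α₁) / r ^ (n - 2) > 0` for `r ≥ R`. If `w` vanished somewhere,
take its last zero `a`. On `[a, ∞)` we have `w ≥ 0`, so `∂²V/∂u² ≤ 1/(4r²)` turns the difference
of the two equations into `w'' + (n - 1)/r w' + w/(4r²) ≥ 0`. With `m = (n - 2)/2` (so that
`n - 1 = 2m + 1` and `m² ≥ 1/4`), the function `G r = r ^ m * (m * w r + r * w' r) = r (r ^ m w)'`
has `G' = r ^ (m - 1) (r² (w'' + (2m + 1)/r w') + m² w) ≥ 0` there. As `w a = 0` and `w' a ≥ 0`,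
`G ≥ 0` on `[a, ∞)`; but beyond `R`, `m * w + r * w' = -m * w < 0`.
-/

open Set Filter Topology

lemma HasDerivAt.nonneg_of_forall_le_right {f : ℝ → ℝ} {f' a : ℝ} (hf : HasDerivAt f f' a)
    (h : ∀ x, a < x → f a ≤ f x) : 0 ≤ f' := by
  refine ge_of_tendsto (hasDerivAt_iff_tendsto_slope_left_right.mp hf).2 ?_
  filter_upwards [self_mem_nhdsWithin] with x (hx : a < x)
  rw [slope_def_field]
  exact div_nonneg (sub_nonneg.mpr (h x hx)) (sub_nonneg.mpr hx.le)

lemma HasDerivAt.mul_eq_neg_mul_of_eventuallyEq_div_pow {w : ℝ → ℝ} {d c r : ℝ} {k : ℕ}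
    (hw : HasDerivAt w d r) (heq : w =ᶠ[𝓝 r] fun x => c / x ^ k) (hr : r ≠ 0) :
    r * d = -k * w r := by
  have hpow := (hasDerivAt_zpow (-(k : ℤ)) r (Or.inl hr)).const_mul c
  have hfun : (fun x : ℝ => c / x ^ k) = fun x => c * x ^ (-(k : ℤ)) := by
    funext x
    rw [zpow_neg, zpow_natCast, div_eq_mul_inv]
  rw [hw.unique (hpow.congr_of_eventuallyEq (hfun ▸ heq)), heq.eq_of_nhds, zpow_sub_one₀ hr,
    zpow_neg, zpow_natCast]
  push_cast
  field_simp

lemma ContinuousOn.exists_last_zero {w : ℝ → ℝ} {r₀ R : ℝ}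
    (hw : ContinuousOn w (Ici r₀)) (h₀ : w r₀ ≤ 0) (hpos : ∀ r, R ≤ r → 0 < w r) :
    ∃ a, r₀ ≤ a ∧ w a = 0 ∧ ∀ r, a ≤ r → 0 ≤ w r := by
  set S := Icc r₀ R ∩ w ⁻¹' Iic 0
  have hr₀S : r₀ ∈ S := ⟨⟨le_rfl, not_lt.mp fun h => (hpos r₀ h.le).not_ge h₀⟩, h₀⟩
  have hS : IsCompact S := isCompact_Icc.of_isClosed_subset
    ((hw.mono Icc_subset_Ici_self).preimage_isClosed_of_isClosed isClosed_Icc isClosed_Iic)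
    inter_subset_left
  obtain ⟨a, ⟨⟨hr₀a, -⟩, hwa⟩, ha⟩ := hS.exists_isGreatest ⟨r₀, hr₀S⟩
  have hgt : ∀ r, a < r → 0 < w r := by
    intro r har
    by_contra! hwr
    rcases le_or_gt R r with hRr | hrR
    · exact (hpos r hRr).not_ge hwr
    · exact har.not_ge (ha ⟨⟨hr₀a.trans har.le, hrR.le⟩, hwr⟩)
  have hwa' : 0 ≤ w a :=
    ge_of_tendsto ((hw a hr₀a).mono (Ioi_subset_Ici hr₀a))
      (eventually_nhdsWithin_of_forall fun x hx => (hgt x hx).le)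
  exact ⟨a, hr₀a, le_antisymm hwa hwa', fun r har => har.eq_or_lt.elim (· ▸ hwa') (hgt r · |>.le)⟩

lemma ContDiffOn.hasDerivAt_deriv {𝕜 F : Type*} [NontriviallyNormedField 𝕜]
    [NormedAddCommGroup F] [NormedSpace 𝕜 F] {u : 𝕜 → F} {s : Set 𝕜} {x : 𝕜} {k : WithTop ℕ∞}
    (hu : ContDiffOn 𝕜 k u s) (hk : k ≠ 0) (hs : IsOpen s) (hx : x ∈ s) :
    HasDerivAt u (deriv u x) x :=
  ((hu.differentiableOn hk).differentiableAt (hs.mem_nhds hx)).hasDerivAt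

lemma ContDiffOn.hasDerivAt_deriv_deriv {𝕜 F : Type*} [NontriviallyNormedField 𝕜]
    [NormedAddCommGroup F] [NormedSpace 𝕜 F] {u : 𝕜 → F} {s : Set 𝕜} {x : 𝕜} {k : WithTop ℕ∞}
    (hu : ContDiffOn 𝕜 k u s) (hk : 2 ≤ k) (hs : IsOpen s) (hx : x ∈ s) :
    HasDerivAt (deriv u) (deriv (deriv u) x) x :=
  (hu.deriv_of_isOpen hs (m := 1) hk).hasDerivAt_deriv one_ne_zero hs hx

section RadialSupersolution

/- `euler` in the names below refers to the Euler operator `(m + r d/dr) w = m * w r + r * w' r`. -/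

variable {m a : ℝ} {w w' w'' : ℝ → ℝ}

lemma hasDerivAt_rpow_mul_euler {r : ℝ} (hr : 0 < r) (hw : HasDerivAt w (w' r) r)
    (hw' : HasDerivAt w' (w'' r) r) :
    HasDerivAt (fun x => x ^ m * (m * w x + x * w' x))
      (r ^ (m - 1) * (m ^ 2 * w r + (2 * m + 1) * r * w' r + r ^ 2 * w'' r)) r := by
  refine ((Real.hasDerivAt_rpow_const (p := m) (Or.inl hr.ne')).mul
    ((hw.const_mul m).add ((hasDerivAt_id' (x := r)).mul hw'))).congr_deriv ?_
  rw [Real.rpow_sub_one hr.ne']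
  simp only [Pi.add_apply, Pi.mul_apply]
  field_simp
  ring

lemma monotoneOn_rpow_mul_euler (hm : 1 / 2 ≤ m) (ha : 0 < a)
    (hw : ∀ r ∈ Ici a, HasDerivAt w (w' r) r) (hw' : ∀ r ∈ Ici a, HasDerivAt w' (w'' r) r)
    (hnn : ∀ r ∈ Ici a, 0 ≤ w r)
    (hsuper : ∀ r ∈ Ioi a, 0 ≤ w'' r + (2 * m + 1) / r * w' r + w r / (4 * r ^ 2)) :
    MonotoneOn (fun x => x ^ m * (m * w x + x * w' x)) (Ici a) := by
  have hG : ∀ r ∈ Ici a, HasDerivAt (fun x => x ^ m * (m * w x + x * w' x))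
      (r ^ (m - 1) * (m ^ 2 * w r + (2 * m + 1) * r * w' r + r ^ 2 * w'' r)) r :=
    fun r hr => hasDerivAt_rpow_mul_euler (ha.trans_le hr) (hw r hr) (hw' r hr)
  refine monotoneOn_of_hasDerivWithinAt_nonneg (convex_Ici a)
    (fun r hr => (hG r hr).continuousAt.continuousWithinAt)
    (fun r hr => (hG r (interior_subset hr)).hasDerivWithinAt) fun r hr => ?_
  rw [interior_Ici] at hr
  have hr₀ : 0 < r := ha.trans hr
  have hsplit : m ^ 2 * w r + (2 * m + 1) * r * w' r + r ^ 2 * w'' r =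
      r ^ 2 * (w'' r + (2 * m + 1) / r * w' r + w r / (4 * r ^ 2)) + (m ^ 2 - 1 / 4) * w r := by
    field_simp
    ring
  have hm2 : 0 ≤ m ^ 2 - 1 / 4 := by nlinarith
  have hsr := hsuper r hr
  have hwr := hnn r (mem_Ici.mpr hr.le)
  rw [hsplit]
  positivity

lemma euler_nonneg_of_supersolution (hm : 1 / 2 ≤ m) (ha : 0 < a)
    (hw : ∀ r ∈ Ici a, HasDerivAt w (w' r) r) (hw' : ∀ r ∈ Ici a, HasDerivAt w' (w'' r) r)
    (hza : w a = 0) (hnn : ∀ r ∈ Ici a, 0 ≤ w r)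
    (hsuper : ∀ r ∈ Ioi a, 0 ≤ w'' r + (2 * m + 1) / r * w' r + w r / (4 * r ^ 2)) :
    ∀ r ∈ Ici a, 0 ≤ m * w r + r * w' r := by
  intro r hr
  have hw'a : 0 ≤ w' a :=
    (hw a self_mem_Ici).nonneg_of_forall_le_right fun x hx => hza ▸ hnn x hx.le
  have hGa : 0 ≤ a ^ m * (m * w a + a * w' a) := by
    rw [hza]
    positivity
  have hGr := hGa.trans (monotoneOn_rpow_mul_euler hm ha hw hw' hnn hsuper self_mem_Ici hr hr)
  exact nonneg_of_mul_nonneg_right hGr (Real.rpow_pos_of_pos (ha.trans_le hr) m)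

end RadialSupersolution

theorem radial_solutions_ordered_general
    {n : ℕ} (hn : 3 ≤ n) (R : ℝ)
    (V : ℝ × ℝ → ℝ) (hV : ContDiff ℝ 2 V)
    (hVdd : ∀ (u r : ℝ), 0 < r →
      deriv (fun v => deriv (fun w => V (w, r)) v) u ≤ 1 / (4 * r ^ 2))
    (A α₁ α₂ : ℝ) (hα : α₁ < α₂)
    (u₁ u₂ : ℝ → ℝ)
    (hu₁ : ContDiffOn ℝ 2 u₁ (Ioi 0)) (hu₂ : ContDiffOn ℝ 2 u₂ (Ioi 0))
    (heq₁ : ∀ r ∈ Ioi (0 : ℝ),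
      deriv (deriv u₁) r + ((n : ℝ) - 1) / r * deriv u₁ r +
        deriv (fun v => V (v, r)) (u₁ r) = 0)
    (heq₂ : ∀ r ∈ Ioi (0 : ℝ),
      deriv (deriv u₂) r + ((n : ℝ) - 1) / r * deriv u₂ r +
        deriv (fun v => V (v, r)) (u₂ r) = 0)
    (hout₁ : ∀ r : ℝ, R ≤ r → u₁ r = α₁ / r ^ (n - 2) + A)
    (hout₂ : ∀ r : ℝ, R ≤ r → u₂ r = α₂ / r ^ (n - 2) + A) :
    ∀ r ∈ Ioi (0 : ℝ), u₁ r < u₂ r := by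
  intro r₀ (hr₀ : 0 < r₀)
  by_contra! hle
  set m : ℝ := ((n : ℝ) - 2) / 2 with hm
  set w := fun r => u₂ r - u₁ r
  set w' := fun r => deriv u₂ r - deriv u₁ r
  have hw : ∀ r, 0 < r → HasDerivAt w (w' r) r := fun r hr =>
    (hu₂.hasDerivAt_deriv two_ne_zero isOpen_Ioi hr).sub
      (hu₁.hasDerivAt_deriv two_ne_zero isOpen_Ioi hr)
  have hw' : ∀ r, 0 < r → HasDerivAt w' (deriv (deriv u₂) r - deriv (deriv u₁) r) r :=
    fun r hr => (hu₂.hasDerivAt_deriv_deriv le_rfl isOpen_Ioi hr).sub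
      (hu₁.hasDerivAt_deriv_deriv le_rfl isOpen_Ioi hr)
  have htail : ∀ r, R ≤ r → w r = (α₂ - α₁) / r ^ (n - 2) := fun r hr => by
    simp only [w, hout₁ r hr, hout₂ r hr]
    ring
  have hpos : ∀ r, max R r₀ ≤ r → 0 < w r := fun r hr => by
    rw [htail r (le_of_max_le_left hr)]
    exact div_pos (sub_pos.mpr hα) (pow_pos (hr₀.trans_le (le_of_max_le_right hr)) _)
  obtain ⟨a, hr₀a, hza, hnn⟩ := ContinuousOn.exists_last_zero
    (fun r hr => (hw r (hr₀.trans_le hr)).continuousAt.continuousWithinAt)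
    (sub_nonpos.mpr hle) hpos
  have ha : 0 < a := hr₀.trans_le hr₀a
  have hsuper : ∀ r ∈ Ioi a, 0 ≤ (deriv (deriv u₂) r - deriv (deriv u₁) r) +
      (2 * m + 1) / r * w' r + w r / (4 * r ^ 2) := by
    intro r hr
    have hr0 : 0 < r := ha.trans hr
    have hVr : ContDiff ℝ 2 fun v => V (v, r) := hV.comp (contDiff_id.prodMk contDiff_const)
    have hlip := image_sub_le_mul_sub_of_deriv_le hVr.differentiable_deriv_two
      (hVdd · r hr0) (sub_nonneg.mp (hnn r hr.le))
    simp only [w, w', hm]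
    linear_combination heq₁ r hr0 - heq₂ r hr0 + hlip
  have hm₀ : 1 / 2 ≤ m := by
    have : (3 : ℝ) ≤ n := by exact_mod_cast hn
    linarith
  have hweight := euler_nonneg_of_supersolution hm₀ ha (fun r hr => hw r (ha.trans_le hr))
    (fun r hr => hw' r (ha.trans_le hr)) hza hnn hsuper
  set b := max R a + 1
  have hRb : R < b := (le_max_left R a).trans_lt (lt_add_one _)
  have hab : a < b := (le_max_right R a).trans_lt (lt_add_one _)
  have hb : b * w' b = -((n - 2 : ℕ) : ℝ) * w b :=
    (hw b (ha.trans hab)).mul_eq_neg_mul_of_eventuallyEq_div_pow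
      (eventually_of_mem (Ioi_mem_nhds hRb) fun x hx => htail x (le_of_lt hx)) (ha.trans hab).ne'
  have hk : ((n - 2 : ℕ) : ℝ) = 2 * m := by
    rw [Nat.cast_sub (by omega), hm]
    push_cast
    ring
  have hwb := hpos b (max_le hRb.le (hr₀a.trans hab.le))
  have hGb := hweight b hab.le
  rw [hb, hk] at hGb
  nlinarith

/-- Theorem 3 (ordering of the family `N_A`): for `n ≥ 3` and a compactly supported
radial `C²` potential `V(u,r)` supported in `{r ≤ R}` with `∂²V/∂u²(u,r) ≤ 1/(4r²)`,
two radial solutions that equal `α₁/r^{n-2} + A` and `α₂/r^{n-2} + A` outside the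
support, with `α₁ < α₂`, satisfy `u₁(r) < u₂(r)` for all `r > 0`. -/
theorem radial_solutions_ordered
    {n : ℕ} (hn : 3 ≤ n) (R : ℝ)
    (V : ℝ × ℝ → ℝ) (hV : ContDiff ℝ 2 V) (hVc : HasCompactSupport V)
    (hVs : Function.support V ⊆ {p : ℝ × ℝ | p.2 ≤ R})
    (hVdd : ∀ (u r : ℝ), 0 < r →
      deriv (fun v => deriv (fun w => V (w, r)) v) u ≤ 1 / (4 * r ^ 2))
    (A α₁ α₂ : ℝ) (hα : α₁ < α₂)
    (u₁ u₂ : ℝ → ℝ)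
    (hu₁ : ContDiffOn ℝ 2 u₁ (Ioi 0)) (hu₂ : ContDiffOn ℝ 2 u₂ (Ioi 0))
    (heq₁ : ∀ r ∈ Ioi (0 : ℝ),
      deriv (deriv u₁) r + ((n : ℝ) - 1) / r * deriv u₁ r +
        deriv (fun v => V (v, r)) (u₁ r) = 0)
    (heq₂ : ∀ r ∈ Ioi (0 : ℝ),
      deriv (deriv u₂) r + ((n : ℝ) - 1) / r * deriv u₂ r +
        deriv (fun v => V (v, r)) (u₂ r) = 0)
    (hout₁ : ∀ r : ℝ, R ≤ r → u₁ r = α₁ / r ^ (n - 2) + A)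
    (hout₂ : ∀ r : ℝ, R ≤ r → u₂ r = α₂ / r ^ (n - 2) + A) :
    ∀ r ∈ Ioi (0 : ℝ), u₁ r < u₂ r :=
  radial_solutions_ordered_general hn R V hV hVdd A α₁ α₂ hα u₁ u₂ hu₁ hu₂ heq₁ heq₂ hout₁ hout₂
end

section
/- Let n ≥ 3 be an integer and let c : (0,∞) → ℝ be a continuous function satisfying c(r) ≤ ((n−2)/2)²/r² for all r > 0. If ξ : (0,∞) → ℝ is a C² solution of ξ''(r) + ((n−1)/r)·ξ'(r) + c(r)·ξ(r) = 0 and ξ(r₁) = ξ(r₂) = 0 for some 0 < r₁ < r₂, then ξ is identically zero. -/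
/-!
Put `β = (n - 2) / 2`. The ground-state substitution `u = r ^ β * ξ` turns the equation into
`(r u')' = (β² / r - r c) u`, whose potential is nonnegative by the bound on `c`. Hence
`(r u u')' = (β² / r - r c) u² + r u'² ≥ 0`: the function `r u u'` is monotone and vanishes at
`r₁` and `r₂`, so it vanishes on `[r₁, r₂]`, which forces `u' = 0` and then `u = ξ = 0` there.
Now `ξ` and `ξ'` vanish at an interior point, and uniqueness for the linear ODE propagates
`ξ = 0` to all of `(0, ∞)`.
-/

open Set Filter Topology

theorem HasDerivAt.eq_zero_of_eqOn_zero {f : ℝ → ℝ} {f' t : ℝ} {s : Set ℝ}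
    (hf : HasDerivAt f f' t) (hs : s ∈ 𝓝 t) (h : EqOn f 0 s) : f' = 0 :=
  hf.unique ((hasDerivAt_const t (0 : ℝ)).congr_of_eventuallyEq (mem_of_superset hs h))

theorem eqOn_zero_of_hasDerivAt_nonneg {f f' : ℝ → ℝ} {a b : ℝ}
    (hf : ∀ t ∈ Icc a b, HasDerivAt f (f' t) t) (hf' : ∀ t ∈ Ioo a b, 0 ≤ f' t)
    (ha : f a = 0) (hb : f b = 0) : EqOn f 0 (Icc a b) := by
  have hmono : MonotoneOn f (Icc a b) := by
    refine monotoneOn_of_hasDerivWithinAt_nonneg (f' := f') (convex_Icc a b)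
      (fun t ht => (hf t ht).continuousAt.continuousWithinAt) (fun t ht => ?_) ?_
    · rw [interior_Icc] at ht ⊢
      exact (hf t (Ioo_subset_Icc_self ht)).hasDerivWithinAt
    · rwa [interior_Icc]
  intro t ht
  have hab : a ≤ b := ht.1.trans ht.2
  have h₁ := hmono (left_mem_Icc.2 hab) ht ht.1
  have h₂ := hmono ht (right_mem_Icc.2 hab) ht.2
  rw [ha] at h₁
  rw [hb] at h₂
  exact le_antisymm h₂ h₁

theorem eqOn_zero_of_hasDerivAt_weight_mul_deriv {w Q u u' : ℝ → ℝ} {a b : ℝ}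
    (hu : ∀ t ∈ Icc a b, HasDerivAt u (u' t) t)
    (hwu : ∀ t ∈ Icc a b, HasDerivAt (fun s => w s * u' s) (Q t * u t) t)
    (hw : ∀ t ∈ Ioo a b, 0 < w t) (hQ : ∀ t ∈ Ioo a b, 0 ≤ Q t)
    (ha : u a = 0) (hb : u b = 0) : EqOn u 0 (Icc a b) := by
  set F : ℝ → ℝ := fun s => w s * u' s * u s
  have hF : ∀ t ∈ Icc a b, HasDerivAt F (Q t * u t ^ 2 + w t * u' t ^ 2) t := fun t ht =>
    ((hwu t ht).mul (hu t ht)).congr_deriv (by ring)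
  have hF₀ : EqOn F 0 (Icc a b) := eqOn_zero_of_hasDerivAt_nonneg hF
    (fun t ht => by have := hw t ht; have := hQ t ht; positivity)
    (by simp [F, ha]) (by simp [F, hb])
  have hu' : ∀ t ∈ Ioo a b, u' t = 0 := by
    intro t ht
    have hsum := (hF t (Ioo_subset_Icc_self ht)).eq_zero_of_eqOn_zero (isOpen_Ioo.mem_nhds ht)
      (hF₀.mono Ioo_subset_Icc_self)
    have hwt := hw t ht
    obtain ⟨-, hwu'⟩ := (add_eq_zero_iff_of_nonneg (mul_nonneg (hQ t ht) (sq_nonneg _))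
      (mul_nonneg hwt.le (sq_nonneg _))).1 hsum
    simpa [hwt.ne'] using hwu'
  exact eqOn_zero_of_hasDerivAt_nonneg hu (fun t ht => (hu' t ht).ge) ha hb

/-- The function differentiated is `r u'` for the ground-state substitution `u = r ^ β * ξ`, which
turns `ξ'' + ((2β + 1) / r) ξ' + c ξ = 0` into `(r u')' = (β² / r - r c) u`. -/
theorem hasDerivAt_groundState_flux {β r ξ'' : ℝ} {c ξ ξ' : ℝ → ℝ} (hr : 0 < r)
    (hξ : HasDerivAt ξ (ξ' r) r) (hξ' : HasDerivAt ξ' ξ'' r)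
    (heq : ξ'' + (2 * β + 1) / r * ξ' r + c r * ξ r = 0) :
    HasDerivAt (fun s => s * (β * s ^ (β - 1) * ξ s + s ^ β * ξ' s))
      ((β ^ 2 / r - r * c r) * (r ^ β * ξ r)) r := by
  have hpow : ∀ γ : ℝ, HasDerivAt (fun s : ℝ => s ^ γ) (γ * r ^ (γ - 1)) r := fun γ =>
    Real.hasDerivAt_rpow_const (Or.inl hr.ne')
  have hflux := (hasDerivAt_id' r).fun_mul
    ((((hpow (β - 1)).const_mul β).fun_mul hξ).fun_add ((hpow β).fun_mul hξ'))
  refine hflux.congr_deriv ?_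
  have hξ'' : ξ'' = -((2 * β + 1) / r * ξ' r) - c r * ξ r := by linear_combination heq
  have hβ₁ : r ^ β = r ^ (β - 1) * r := by rw [← Real.rpow_add_one hr.ne']; ring_nf
  have hβ₂ : r ^ (β - 1 - 1) * r = r ^ (β - 1) := by rw [← Real.rpow_add_one hr.ne']; ring_nf
  rw [hξ'', hβ₁, ← hβ₂]
  field_simp
  ring

theorem eqOn_zero_of_radialJacobi_of_eq_zero {m r₁ r₂ : ℝ} {c ξ ξ' ξ'' : ℝ → ℝ} (hr₁ : 0 < r₁)
    (hcb : ∀ r ∈ Icc r₁ r₂, c r ≤ ((m - 2) / 2) ^ 2 / r ^ 2)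
    (hξ : ∀ r ∈ Icc r₁ r₂, HasDerivAt ξ (ξ' r) r)
    (hξ' : ∀ r ∈ Icc r₁ r₂, HasDerivAt ξ' (ξ'' r) r)
    (heq : ∀ r ∈ Icc r₁ r₂, ξ'' r + (m - 1) / r * ξ' r + c r * ξ r = 0)
    (hz₁ : ξ r₁ = 0) (hz₂ : ξ r₂ = 0) : EqOn ξ 0 (Icc r₁ r₂) := by
  set β := (m - 2) / 2
  have hpos : ∀ r ∈ Icc r₁ r₂, 0 < r := fun r hr => hr₁.trans_le hr.1
  have hQ : ∀ r ∈ Ioo r₁ r₂, 0 ≤ β ^ 2 / r - r * c r := by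
    intro r hr
    have hr₀ := hpos r (Ioo_subset_Icc_self hr)
    have := mul_le_mul_of_nonneg_left (hcb r (Ioo_subset_Icc_self hr)) hr₀.le
    rw [show r * (β ^ 2 / r ^ 2) = β ^ 2 / r by field_simp] at this
    linarith
  have hu := eqOn_zero_of_hasDerivAt_weight_mul_deriv (w := id) (u := fun r => r ^ β * ξ r)
    (fun r hr => (Real.hasDerivAt_rpow_const (Or.inl (hpos r hr).ne')).mul (hξ r hr))
    (fun r hr => hasDerivAt_groundState_flux (hpos r hr) (hξ r hr) (hξ' r hr)
      (by rw [← heq r hr]; ring))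
    (fun r hr => hpos r (Ioo_subset_Icc_self hr)) hQ (by simp [hz₁]) (by simp [hz₂])
  intro r hr
  simpa [(Real.rpow_pos_of_pos (hpos r hr) β).ne'] using hu hr

open scoped NNReal in
theorem lipschitzWith_companion (α β : ℝ) :
    LipschitzWith (max 1 (‖α‖₊ + ‖β‖₊)) fun y : ℝ × ℝ => (y.2, α * y.2 + β * y.1) := by
  have h := (LipschitzWith.prod_snd (α := ℝ) (β := ℝ)).prodMk
    (((lipschitzWith_smul α).comp LipschitzWith.prod_snd).add
      ((lipschitzWith_smul β).comp LipschitzWith.prod_fst))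
  simpa only [mul_one, Function.comp_apply, smul_eq_mul] using h

theorem eqOn_zero_of_hasDerivAt_linear_second_order {p q x x' : ℝ → ℝ} {a b t₀ : ℝ}
    (hp : ContinuousOn p (Icc a b)) (hq : ContinuousOn q (Icc a b))
    (hx : ∀ t ∈ Ioo a b, HasDerivAt x (x' t) t)
    (hx' : ∀ t ∈ Ioo a b, HasDerivAt x' (p t * x' t + q t * x t) t)
    (ht₀ : t₀ ∈ Ioo a b) (h₀ : x t₀ = 0) (h₀' : x' t₀ = 0) :
    EqOn x 0 (Ioo a b) := by
  obtain ⟨P, hP⟩ := isCompact_Icc.exists_bound_of_continuousOn hp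
  obtain ⟨Q, hQ⟩ := isCompact_Icc.exists_bound_of_continuousOn hq
  have hv : ∀ t ∈ Ioo a b, LipschitzOnWith (max 1 (P.toNNReal + Q.toNNReal))
      (fun y : ℝ × ℝ => (y.2, p t * y.2 + q t * y.1)) univ := fun t ht => by
    refine ((lipschitzWith_companion (p t) (q t)).weaken ?_).lipschitzOnWith
    gcongr
    · exact NNReal.le_toNNReal_of_coe_le (hP t (Ioo_subset_Icc_self ht))
    · exact NNReal.le_toNNReal_of_coe_le (hQ t (Ioo_subset_Icc_self ht))
  have hsol := ODE_solution_unique_of_mem_Ioo hv ht₀ (f := fun t => (x t, x' t))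
    (g := fun _ => ((0 : ℝ), (0 : ℝ)))
    (fun t ht => ⟨(hx t ht).prodMk (hx' t ht), trivial⟩)
    (fun t _ => ⟨by convert hasDerivAt_const t ((0 : ℝ), (0 : ℝ)) using 1; simp, trivial⟩)
    (by simp [h₀, h₀'])
  exact fun t ht => congrArg Prod.fst (hsol ht)

theorem eqOn_zero_of_radialJacobi_of_deriv_eq_zero {m s : ℝ} {c ξ ξ' ξ'' : ℝ → ℝ}
    (hc : ContinuousOn c (Ioi 0))
    (hξ : ∀ r ∈ Ioi (0 : ℝ), HasDerivAt ξ (ξ' r) r)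
    (hξ' : ∀ r ∈ Ioi (0 : ℝ), HasDerivAt ξ' (ξ'' r) r)
    (heq : ∀ r ∈ Ioi (0 : ℝ), ξ'' r + (m - 1) / r * ξ' r + c r * ξ r = 0)
    (hs : 0 < s) (h₀ : ξ s = 0) (h₀' : ξ' s = 0) : EqOn ξ 0 (Ioi 0) := by
  intro t ht
  have hmin : 0 < min s t := lt_min hs ht
  have hsub : Icc (min s t / 2) (max s t + 1) ⊆ Ioi 0 := fun r hr => (half_pos hmin).trans_le hr.1
  have hmem : ∀ r, min s t ≤ r → r ≤ max s t → r ∈ Ioo (min s t / 2) (max s t + 1) :=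
    fun r h₁ h₂ => ⟨by linarith, by linarith⟩
  refine eqOn_zero_of_hasDerivAt_linear_second_order (p := fun r => -((m - 1) / r))
    (q := fun r => -c r) ?_ (hc.mono hsub).neg (fun r hr => hξ r (hsub (Ioo_subset_Icc_self hr)))
    (fun r hr => ?_) (hmem s (min_le_left s t) (le_max_left s t)) h₀ h₀'
    (hmem t (min_le_right s t) (le_max_right s t))
  · exact (continuousOn_const.div continuousOn_id fun r hr => (hsub hr).ne').neg
  · have hr₀ := hsub (Ioo_subset_Icc_self hr)
    exact (hξ' r hr₀).congr_deriv (by linear_combination heq r hr₀)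

theorem radial_jacobi_no_conjugate_points_general
    {n : ℕ}
    (c : ℝ → ℝ) (hc : ContinuousOn c (Ioi 0))
    (hcb : ∀ r : ℝ, 0 < r → c r ≤ (((n : ℝ) - 2) / 2) ^ 2 / r ^ 2)
    (ξ : ℝ → ℝ) (hξ : ContDiffOn ℝ 2 ξ (Ioi 0))
    (heq : ∀ r ∈ Ioi (0 : ℝ),
      deriv (deriv ξ) r + ((n : ℝ) - 1) / r * deriv ξ r + c r * ξ r = 0)
    (r₁ r₂ : ℝ) (hr₁ : 0 < r₁) (hr : r₁ < r₂)
    (hz₁ : ξ r₁ = 0) (hz₂ : ξ r₂ = 0) :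
    ∀ r ∈ Ioi (0 : ℝ), ξ r = 0 := by
  have hξ₁ : ∀ r ∈ Ioi (0 : ℝ), HasDerivAt ξ (deriv ξ r) r := fun r hr =>
    ((hξ.differentiableOn two_ne_zero).differentiableAt (isOpen_Ioi.mem_nhds hr)).hasDerivAt
  have hξ₂ : ∀ r ∈ Ioi (0 : ℝ), HasDerivAt (deriv ξ) (deriv (deriv ξ) r) r := fun r hr =>
    (((hξ.deriv_of_isOpen isOpen_Ioi one_add_one_eq_two.le).differentiableOn one_ne_zero)
      |>.differentiableAt (isOpen_Ioi.mem_nhds hr)).hasDerivAt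
  have hIcc : Icc r₁ r₂ ⊆ Ioi 0 := fun r hr => hr₁.trans_le hr.1
  have hvanish : EqOn ξ 0 (Icc r₁ r₂) := eqOn_zero_of_radialJacobi_of_eq_zero hr₁
    (fun r hr => hcb r (hIcc hr)) (fun r hr => hξ₁ r (hIcc hr)) (fun r hr => hξ₂ r (hIcc hr))
    (fun r hr => heq r (hIcc hr)) hz₁ hz₂
  set s := (r₁ + r₂) / 2
  have hs : s ∈ Ioo r₁ r₂ := ⟨left_lt_add_div_two.2 hr, add_div_two_lt_right.2 hr⟩
  have hξs : ξ s = 0 := hvanish (Ioo_subset_Icc_self hs)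
  have hξ's : deriv ξ s = 0 := (hξ₁ s (hIcc (Ioo_subset_Icc_self hs))).eq_zero_of_eqOn_zero
    (isOpen_Ioo.mem_nhds hs) (hvanish.mono Ioo_subset_Icc_self)
  exact eqOn_zero_of_radialJacobi_of_deriv_eq_zero hc hξ₁ hξ₂ heq (hr₁.trans hs.1) hξs hξ's

/-- Absence of conjugate points for the radial Jacobi equation in dimension `n ≥ 3`:
if `c(r) ≤ ((n-2)/2)²/r²` and `ξ` solves `ξ'' + ((n-1)/r)ξ' + c(r)ξ = 0` on `(0,∞)`
with `ξ(r₁) = ξ(r₂) = 0` for some `0 < r₁ < r₂`, then `ξ ≡ 0` on `(0,∞)`. -/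
theorem radial_jacobi_no_conjugate_points
    {n : ℕ} (hn : 3 ≤ n)
    (c : ℝ → ℝ) (hc : ContinuousOn c (Ioi 0))
    (hcb : ∀ r : ℝ, 0 < r → c r ≤ (((n : ℝ) - 2) / 2) ^ 2 / r ^ 2)
    (ξ : ℝ → ℝ) (hξ : ContDiffOn ℝ 2 ξ (Ioi 0))
    (heq : ∀ r ∈ Ioi (0 : ℝ),
      deriv (deriv ξ) r + ((n : ℝ) - 1) / r * deriv ξ r + c r * ξ r = 0)
    (r₁ r₂ : ℝ) (hr₁ : 0 < r₁) (hr : r₁ < r₂)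
    (hz₁ : ξ r₁ = 0) (hz₂ : ξ r₂ = 0) :
    ∀ r ∈ Ioi (0 : ℝ), ξ r = 0 :=
  radial_jacobi_no_conjugate_points_general c hc hcb ξ hξ heq r₁ r₂ hr₁ hr hz₁ hz₂
end

section
/- Let n ≥ 3 be an integer and let c : (0,∞) → ℝ be a continuous function satisfying c(r) ≤ 1/(4r²) for all r > 0. If ξ : (0,∞) → ℝ is a C² solution of ξ''(r) + ((n−1)/r)·ξ'(r) + c(r)·ξ(r) = 0 with ξ'(r₁) = 0 and ξ(r₂) = 0 for some 0 < r₁ < r₂, then ξ is identically zero. -/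
/-!
If `ξ(r₁) ≠ 0`, say `ξ(r₁) > 0`, let `s ∈ (r₁, r₂]` be the first zero of `ξ`. Compare `ξ` with
`u = r^(-1/2)`, a solution of the same radial equation with the larger coefficient
`(n - 5/2)/(2r²) ≥ 1/(4r²) ≥ c`: the weighted Wronskian `W = r^(n-1) (ξ' u - ξ u')` is
nondecreasing on `[r₁, s]` because `ξ ≥ 0` there, yet `W(r₁) = r₁^(n-5/2) ξ(r₁)/2 > 0` and
`W(s) = s^(n-3/2) ξ'(s) ≤ 0`. Hence `ξ(r₁) = ξ'(r₁) = 0`, and uniqueness for the linear ODE,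
whose coefficients are continuous on `(0, ∞)`, gives `ξ ≡ 0`.
-/

open Set
open scoped NNReal

def secondOrderLinearField (p q : ℝ → ℝ) (t : ℝ) (u : ℝ × ℝ) : ℝ × ℝ :=
  (u.2, -(p t * u.2 + q t * u.1))

lemma secondOrderLinearField_zero (p q : ℝ → ℝ) (t : ℝ) : secondOrderLinearField p q t 0 = 0 := by
  simp [secondOrderLinearField]

lemma lipschitzWith_secondOrderLinearField {p q : ℝ → ℝ} {t : ℝ} {K : ℝ≥0}
    (hK : 1 + |p t| + |q t| ≤ K) : LipschitzWith K (secondOrderLinearField p q t) := by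
  refine LipschitzWith.of_dist_le_mul fun u w => ?_
  have h₁ : |u.1 - w.1| ≤ dist u w := by
    rw [Prod.dist_eq, ← Real.dist_eq]; exact le_max_left _ _
  have h₂ : |u.2 - w.2| ≤ dist u w := by
    rw [Prod.dist_eq, ← Real.dist_eq]; exact le_max_right _ _
  have hp : |p t * (u.2 - w.2)| ≤ |p t| * dist u w := by
    rw [abs_mul]; exact mul_le_mul_of_nonneg_left h₂ (abs_nonneg _)
  have hq : |q t * (u.1 - w.1)| ≤ |q t| * dist u w := by
    rw [abs_mul]; exact mul_le_mul_of_nonneg_left h₁ (abs_nonneg _)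
  have hd := dist_nonneg (x := u) (y := w)
  have hsecond : |-(p t * u.2 + q t * u.1) - -(p t * w.2 + q t * w.1)| ≤ K * dist u w := by
    calc _ = |-(p t * (u.2 - w.2) + q t * (u.1 - w.1))| := by ring_nf
      _ ≤ |p t * (u.2 - w.2)| + |q t * (u.1 - w.1)| := by rw [abs_neg]; exact abs_add_le _ _
      _ ≤ K * dist u w := by nlinarith
  rw [Prod.dist_eq, Real.dist_eq, Real.dist_eq]
  simp only [secondOrderLinearField]
  exact max_le (by nlinarith [abs_nonneg (p t), abs_nonneg (q t)]) hsecond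

lemma exists_lipschitzWith_secondOrderLinearField {p q : ℝ → ℝ} {a b : ℝ}
    (hp : ContinuousOn p (Icc a b)) (hq : ContinuousOn q (Icc a b)) :
    ∃ K, ∀ t ∈ Icc a b, LipschitzWith K (secondOrderLinearField p q t) := by
  obtain ⟨P, hP⟩ := isCompact_Icc.exists_bound_of_continuousOn hp
  obtain ⟨Q, hQ⟩ := isCompact_Icc.exists_bound_of_continuousOn hq
  refine ⟨Real.toNNReal (1 + P + Q), fun t ht => lipschitzWith_secondOrderLinearField ?_⟩
  have := hP t ht
  have := hQ t ht
  rw [Real.norm_eq_abs] at *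
  linarith [Real.le_coe_toNNReal (1 + P + Q)]

lemma hasDerivAt_secondOrderLinearField {p q y y' y'' : ℝ → ℝ} {t : ℝ}
    (hy : HasDerivAt y (y' t) t) (hy' : HasDerivAt y' (y'' t) t)
    (heq : y'' t + p t * y' t + q t * y t = 0) :
    HasDerivAt (fun t => (y t, y' t)) (secondOrderLinearField p q t (y t, y' t)) t := by
  convert hy.prodMk hy' using 1
  simp only [secondOrderLinearField, Prod.mk.injEq, true_and]
  linarith

theorem eqOn_zero_of_secondOrderLinear {p q y y' y'' : ℝ → ℝ} {s : Set ℝ} (hs : s.OrdConnected)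
    (hp : ContinuousOn p s) (hq : ContinuousOn q s)
    (hy : ∀ t ∈ s, HasDerivAt y (y' t) t) (hy' : ∀ t ∈ s, HasDerivAt y' (y'' t) t)
    (heq : ∀ t ∈ s, y'' t + p t * y' t + q t * y t = 0)
    {t₀ : ℝ} (ht₀ : t₀ ∈ s) (h0 : y t₀ = 0) (h1 : y' t₀ = 0) : EqOn y 0 s := by
  set Y : ℝ → ℝ × ℝ := fun t => (y t, y' t)
  have hY : ∀ t ∈ s, HasDerivAt Y (secondOrderLinearField p q t (Y t)) t := fun t ht =>
    hasDerivAt_secondOrderLinearField (hy t ht) (hy' t ht) (heq t ht)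
  have hzero : ∀ t, HasDerivAt (fun _ => 0) (secondOrderLinearField p q t 0) t := fun t => by
    rw [secondOrderLinearField_zero]; exact hasDerivAt_const t _
  have hY₀ : Y t₀ = 0 := by simp [Y, h0, h1]
  have hYc : ∀ {a b}, Icc a b ⊆ s → ContinuousOn Y (Icc a b) := fun h =>
    HasDerivAt.continuousOn fun t ht => hY t (h ht)
  intro t ht
  suffices Y t = 0 from congrArg Prod.fst this
  rcases le_total t₀ t with hle | hle
  · have hsub : Icc t₀ t ⊆ s := hs.out ht₀ ht
    obtain ⟨K, hK⟩ := exists_lipschitzWith_secondOrderLinearField (hp.mono hsub) (hq.mono hsub)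
    exact ODE_solution_unique_of_mem_Icc_right (s := fun _ => univ)
      (fun t ht => (hK t (Ico_subset_Icc_self ht)).lipschitzOnWith) (hYc hsub)
      (fun t ht => (hY t (hsub (Ico_subset_Icc_self ht))).hasDerivWithinAt) (fun _ _ => trivial)
      continuousOn_const (fun t _ => (hzero t).hasDerivWithinAt) (fun _ _ => trivial) hY₀
      ⟨hle, le_rfl⟩
  · have hsub : Icc t t₀ ⊆ s := hs.out ht ht₀
    obtain ⟨K, hK⟩ := exists_lipschitzWith_secondOrderLinearField (hp.mono hsub) (hq.mono hsub)
    exact ODE_solution_unique_of_mem_Icc_left (s := fun _ => univ)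
      (fun t ht => (hK t (Ioc_subset_Icc_self ht)).lipschitzOnWith) (hYc hsub)
      (fun t ht => (hY t (hsub (Ioc_subset_Icc_self ht))).hasDerivWithinAt) (fun _ _ => trivial)
      continuousOn_const (fun t _ => (hzero t).hasDerivWithinAt) (fun _ _ => trivial) hY₀
      ⟨le_rfl, hle⟩

lemma ContinuousOn.exists_first_zero {f : ℝ → ℝ} {a b : ℝ} (hf : ContinuousOn f (Icc a b))
    (hab : a ≤ b) (ha : 0 < f a) (hb : f b = 0) :
    ∃ s ∈ Ioc a b, f s = 0 ∧ ∀ x ∈ Icc a s, 0 ≤ f x := by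
  have hZ : IsCompact (Icc a b ∩ f ⁻¹' {0}) :=
    isCompact_Icc.of_isClosed_subset
      (hf.preimage_isClosed_of_isClosed isClosed_Icc isClosed_singleton) inter_subset_left
  obtain ⟨s, ⟨hs, hfs⟩, hleast⟩ := hZ.exists_isLeast ⟨b, ⟨hab, le_rfl⟩, hb⟩
  have has : a < s := hs.1.lt_of_ne (by rintro rfl; simp_all)
  refine ⟨s, ⟨has, hs.2⟩, hfs, fun x hx => le_of_not_gt fun hneg => ?_⟩
  obtain ⟨y, hy, hfy⟩ : (0 : ℝ) ∈ f '' Icc a x :=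
    intermediate_value_Icc' hx.1 (hf.mono (Icc_subset_Icc_right (hx.2.trans hs.2)))
      ⟨hneg.le, ha.le⟩
  have : s ≤ y := hleast ⟨⟨hy.1, hy.2.trans (hx.2.trans hs.2)⟩, hfy⟩
  obtain rfl : y = x := le_antisymm hy.2 (hx.2.trans this)
  exact hneg.ne hfy

lemma HasDerivAt.nonpos_of_isMinOn_Icc {f : ℝ → ℝ} {f' a b : ℝ} (hf : HasDerivAt f f' b)
    (hab : a < b) (hmin : IsMinOn f (Icc a b) b) : f' ≤ 0 := by
  have hcone : a - b ∈ posTangentConeAt (Icc a b) b := by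
    refine sub_mem_posTangentConeAt_of_segment_subset ?_
    rw [segment_symm]
    exact _root_.segment_subset_Icc hab.le
  have := hmin.localize.hasFDerivWithinAt_nonneg hf.hasFDerivAt.hasFDerivWithinAt hcone
  simp only [ContinuousLinearMap.toSpanSingleton_apply, smul_eq_mul] at this
  nlinarith

/-- `r ^ (m - 1) (ξ' u - ξ u')` for `u r = r ^ (-1/2)`, which solves
`u'' + ((m - 1) / r) u' + ((m - 5/2) / (2 r²)) u = 0`. -/
noncomputable def invSqrtWronskian (m : ℝ) (ξ ξ' : ℝ → ℝ) (r : ℝ) : ℝ :=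
  r ^ (m - 5 / 2) * (r * ξ' r + ξ r / 2)

lemma hasDerivAt_invSqrtWronskian {m : ℝ} {c ξ ξ' ξ'' : ℝ → ℝ} {r : ℝ} (hr : 0 < r)
    (hξ : HasDerivAt ξ (ξ' r) r) (hξ' : HasDerivAt ξ' (ξ'' r) r)
    (heq : ξ'' r + (m - 1) / r * ξ' r + c r * ξ r = 0) :
    HasDerivAt (invSqrtWronskian m ξ ξ')
      (r ^ (m - 7 / 2) * ξ r * ((m - 5 / 2) / 2 - c r * r ^ 2)) r := by
  have hpow := Real.hasDerivAt_rpow_const (p := m - 5 / 2) (Or.inl hr.ne')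
  refine (hpow.mul (((hasDerivAt_id r).mul hξ').add (hξ.div_const 2))).congr_deriv ?_
  have hsplit : r ^ (m - 5 / 2) = r ^ (m - 7 / 2) * r := by
    rw [← Real.rpow_add_one hr.ne']; congr 1; ring
  have hξ'' : ξ'' r = -((m - 1) / r * ξ' r + c r * ξ r) := by linarith
  rw [hsplit, hξ'', show m - 5 / 2 - 1 = m - 7 / 2 by ring]
  simp only [Pi.mul_apply, Pi.add_apply, id]
  field_simp
  ring

lemma monotoneOn_invSqrtWronskian {m : ℝ} {c ξ ξ' ξ'' : ℝ → ℝ} {a b : ℝ} (hm : 3 ≤ m)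
    (ha : 0 < a) (hcb : ∀ r ∈ Icc a b, c r ≤ 1 / (4 * r ^ 2))
    (hξ : ∀ r ∈ Icc a b, HasDerivAt ξ (ξ' r) r) (hξ' : ∀ r ∈ Icc a b, HasDerivAt ξ' (ξ'' r) r)
    (heq : ∀ r ∈ Icc a b, ξ'' r + (m - 1) / r * ξ' r + c r * ξ r = 0)
    (hnn : ∀ r ∈ Icc a b, 0 ≤ ξ r) :
    MonotoneOn (invSqrtWronskian m ξ ξ') (Icc a b) := by
  have hW : ∀ r ∈ Icc a b, HasDerivAt (invSqrtWronskian m ξ ξ')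
      (r ^ (m - 7 / 2) * ξ r * ((m - 5 / 2) / 2 - c r * r ^ 2)) r := fun r hr =>
    hasDerivAt_invSqrtWronskian (ha.trans_le hr.1) (hξ r hr) (hξ' r hr) (heq r hr)
  refine monotoneOn_of_hasDerivWithinAt_nonneg (convex_Icc a b)
    (HasDerivAt.continuousOn hW) (fun r hr => (hW r (interior_subset hr)).hasDerivWithinAt)
    fun r hr => ?_
  have hr := interior_subset hr
  have hr₀ : 0 < r := ha.trans_le hr.1
  have hcr : c r * r ^ 2 ≤ 1 / 4 := by
    have := hcb r hr
    rw [le_div_iff₀ (by positivity)] at this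
    linarith
  have hgap : 0 ≤ (m - 5 / 2) / 2 - c r * r ^ 2 := by linarith
  exact mul_nonneg (mul_nonneg (Real.rpow_pos_of_pos hr₀ _).le (hnn r hr)) hgap

theorem radialJacobi_not_pos_of_focal {m : ℝ} {c ξ ξ' ξ'' : ℝ → ℝ} {r₁ r₂ : ℝ} (hm : 3 ≤ m)
    (hr₁ : 0 < r₁) (hr : r₁ < r₂) (hcb : ∀ r ∈ Icc r₁ r₂, c r ≤ 1 / (4 * r ^ 2))
    (hξ : ∀ r ∈ Icc r₁ r₂, HasDerivAt ξ (ξ' r) r) (hξ' : ∀ r ∈ Icc r₁ r₂, HasDerivAt ξ' (ξ'' r) r)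
    (heq : ∀ r ∈ Icc r₁ r₂, ξ'' r + (m - 1) / r * ξ' r + c r * ξ r = 0)
    (hz₁ : ξ' r₁ = 0) (hz₂ : ξ r₂ = 0) : ¬ 0 < ξ r₁ := by
  intro hpos
  obtain ⟨s, hs, hξs, hnn⟩ := (HasDerivAt.continuousOn hξ).exists_first_zero hr.le hpos hz₂
  have hsub : Icc r₁ s ⊆ Icc r₁ r₂ := Icc_subset_Icc_right hs.2
  have hξ's : ξ' s ≤ 0 :=
    (hξ s (hsub (right_mem_Icc.2 hs.1.le))).nonpos_of_isMinOn_Icc hs.1 fun x hx => by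
      simpa [hξs] using hnn x hx
  have hmono := monotoneOn_invSqrtWronskian hm hr₁ (fun r hr => hcb r (hsub hr))
    (fun r hr => hξ r (hsub hr)) (fun r hr => hξ' r (hsub hr)) (fun r hr => heq r (hsub hr)) hnn
  have hle := hmono (left_mem_Icc.2 hs.1.le) (right_mem_Icc.2 hs.1.le) hs.1.le
  have hW₁ : 0 < invSqrtWronskian m ξ ξ' r₁ := by
    rw [invSqrtWronskian, hz₁]
    have := Real.rpow_pos_of_pos hr₁ (m - 5 / 2)
    positivity
  have hWs : invSqrtWronskian m ξ ξ' s ≤ 0 := by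
    rw [invSqrtWronskian, hξs, zero_div, add_zero]
    exact mul_nonpos_of_nonneg_of_nonpos (Real.rpow_pos_of_pos (hr₁.trans hs.1) _).le
      (mul_nonpos_of_nonneg_of_nonpos (hr₁.trans hs.1).le hξ's)
  linarith

theorem radialJacobi_eq_zero_of_focal {m : ℝ} {c ξ ξ' ξ'' : ℝ → ℝ} {r₁ r₂ : ℝ} (hm : 3 ≤ m)
    (hr₁ : 0 < r₁) (hr : r₁ < r₂) (hcb : ∀ r ∈ Icc r₁ r₂, c r ≤ 1 / (4 * r ^ 2))
    (hξ : ∀ r ∈ Icc r₁ r₂, HasDerivAt ξ (ξ' r) r) (hξ' : ∀ r ∈ Icc r₁ r₂, HasDerivAt ξ' (ξ'' r) r)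
    (heq : ∀ r ∈ Icc r₁ r₂, ξ'' r + (m - 1) / r * ξ' r + c r * ξ r = 0)
    (hz₁ : ξ' r₁ = 0) (hz₂ : ξ r₂ = 0) : ξ r₁ = 0 := by
  refine le_antisymm (not_lt.1 (radialJacobi_not_pos_of_focal hm hr₁ hr hcb hξ hξ' heq hz₁ hz₂))
    (not_lt.1 fun hneg => ?_)
  refine radialJacobi_not_pos_of_focal (ξ := fun r => -ξ r) (ξ' := fun r => -ξ' r)
    (ξ'' := fun r => -ξ'' r) hm hr₁ hr hcb (fun r hr => (hξ r hr).neg)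
    (fun r hr => (hξ' r hr).neg) (fun r hr => ?_) (by simp [hz₁]) (by simp [hz₂]) (by simpa)
  linarith [heq r hr]

/-- Absence of focal points for the radial Jacobi equation in dimension `n ≥ 3`:
if `c(r) ≤ 1/(4r²)` and `ξ` solves `ξ'' + ((n-1)/r)ξ' + c(r)ξ = 0` on `(0,∞)`
with `ξ'(r₁) = 0` and `ξ(r₂) = 0` for some `0 < r₁ < r₂`, then `ξ ≡ 0`. -/
theorem radial_jacobi_no_focal_points
    {n : ℕ} (hn : 3 ≤ n)
    (c : ℝ → ℝ) (hc : ContinuousOn c (Ioi 0))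
    (hcb : ∀ r : ℝ, 0 < r → c r ≤ 1 / (4 * r ^ 2))
    (ξ : ℝ → ℝ) (hξ : ContDiffOn ℝ 2 ξ (Ioi 0))
    (heq : ∀ r ∈ Ioi (0 : ℝ),
      deriv (deriv ξ) r + ((n : ℝ) - 1) / r * deriv ξ r + c r * ξ r = 0)
    (r₁ r₂ : ℝ) (hr₁ : 0 < r₁) (hr : r₁ < r₂)
    (hz₁ : deriv ξ r₁ = 0) (hz₂ : ξ r₂ = 0) :
    ∀ r ∈ Ioi (0 : ℝ), ξ r = 0 := by
  have hξ' : ContDiffOn ℝ 1 (deriv ξ) (Ioi 0) := hξ.deriv_of_isOpen isOpen_Ioi (by norm_num)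
  have h1 : ∀ r ∈ Ioi (0 : ℝ), HasDerivAt ξ (deriv ξ r) r := fun r hr =>
    ((hξ.differentiableOn (by norm_num)).differentiableAt (isOpen_Ioi.mem_nhds hr)).hasDerivAt
  have h2 : ∀ r ∈ Ioi (0 : ℝ), HasDerivAt (deriv ξ) (deriv (deriv ξ) r) r := fun r hr =>
    ((hξ'.differentiableOn one_ne_zero).differentiableAt (isOpen_Ioi.mem_nhds hr)).hasDerivAt
  have hIcc : Icc r₁ r₂ ⊆ Ioi 0 := fun r hr => hr₁.trans_le hr.1
  have hξ₁ : ξ r₁ = 0 :=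
    radialJacobi_eq_zero_of_focal (by exact_mod_cast hn) hr₁ hr (fun r hr => hcb r (hIcc hr))
      (fun r hr => h1 r (hIcc hr)) (fun r hr => h2 r (hIcc hr)) (fun r hr => heq r (hIcc hr))
      hz₁ hz₂
  exact eqOn_zero_of_secondOrderLinear (p := fun r => ((n : ℝ) - 1) / r) ordConnected_Ioi
    (continuousOn_const.div continuousOn_id fun r hr => hr.ne') hc h1 h2 heq hr₁ hξ₁ hz₁
end

section
/- Let B > 0, let t₀ < t₁ be real numbers, and let ω : [t₀,t₁] → ℝ be a differentiable function satisfying ω'(t) ≤ B² − ω(t)² for all t ∈ [t₀,t₁]. If ω(t₀) < −B, then t₁ − t₀ < (1/(2B))·ln( (ω(t₀) − B)/(ω(t₀) + B) ). -/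
/-!
While `ω < -B` the inequality `ω' ≤ B² - ω²` forces `ω' < 0`, so `ω` stays below its initial
value and hence below `-B`. There `T(x) = (1/(2B)) log((x - B)/(x + B))` is positive with
`T'(x) = 1/(x² - B²)`, so `t ↦ T(ω t) + t` has derivative `ω'/(ω² - B²) + 1 ≤ 0`. Therefore
`t₁ - t₀ < T(ω t₁) + t₁ - t₀ ≤ T(ω t₀)`.
-/

open Set

/-- The time in which the solution of `ω' = B² - ω²` starting at `x < -B` reaches `-∞`. -/
noncomputable def riccatiBlowupTime (B x : ℝ) : ℝ :=
  1 / (2 * B) * Real.log ((x - B) / (x + B))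

lemma hasDerivAt_riccatiBlowupTime {B x : ℝ} (hB : B ≠ 0) (hsub : x - B ≠ 0) (hadd : x + B ≠ 0) :
    HasDerivAt (riccatiBlowupTime B) (1 / (x ^ 2 - B ^ 2)) x := by
  have hratio : HasDerivAt (fun y => (y - B) / (y + B))
      ((1 * (x + B) - (x - B) * 1) / (x + B) ^ 2) x :=
    ((hasDerivAt_id x).sub_const B).div ((hasDerivAt_id x).add_const B) hadd
  refine ((hratio.log (div_ne_zero hsub hadd)).const_mul (1 / (2 * B))).congr_deriv ?_
  rw [show x ^ 2 - B ^ 2 = (x - B) * (x + B) by ring]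
  field_simp
  ring

lemma riccatiBlowupTime_pos {B x : ℝ} (hB : 0 < B) (hx : x < -B) :
    0 < riccatiBlowupTime B x := by
  have hratio : 1 < (x - B) / (x + B) := by
    rw [one_lt_div_of_neg (by linarith)]
    linarith
  exact mul_pos (by positivity) (Real.log_pos hratio)

lemma le_left_of_hasDerivAt_neg_of_eq_left {f f' : ℝ → ℝ} {a b : ℝ}
    (hf : ∀ t ∈ Icc a b, HasDerivAt f (f' t) t) (hneg : ∀ t ∈ Ico a b, f t = f a → f' t < 0) :
    ∀ t ∈ Icc a b, f t ≤ f a :=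
  image_le_of_deriv_right_lt_deriv_boundary'
    (fun t ht => (hf t ht).continuousAt.continuousWithinAt)
    (fun t ht => (hf t (Ico_subset_Icc_self ht)).hasDerivWithinAt) le_rfl continuousOn_const
    (fun _ _ => hasDerivWithinAt_const _ _ _) hneg

lemma riccati_lt_neg_of_lt_neg {B a b : ℝ} {ω ω' : ℝ → ℝ} (hB : 0 ≤ B)
    (hω : ∀ t ∈ Icc a b, HasDerivAt ω (ω' t) t) (hineq : ∀ t ∈ Icc a b, ω' t ≤ B ^ 2 - ω t ^ 2)
    (ha : ω a < -B) : ∀ t ∈ Icc a b, ω t < -B := by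
  have hle := le_left_of_hasDerivAt_neg_of_eq_left hω fun t ht heq => by
    have := hineq t (Ico_subset_Icc_self ht)
    nlinarith
  exact fun t ht => (hle t ht).trans_lt ha

lemma antitoneOn_riccatiBlowupTime_comp_add {B a b : ℝ} {ω ω' : ℝ → ℝ} (hB : 0 < B)
    (hω : ∀ t ∈ Icc a b, HasDerivAt ω (ω' t) t) (hineq : ∀ t ∈ Icc a b, ω' t ≤ B ^ 2 - ω t ^ 2)
    (ha : ω a < -B) : AntitoneOn (fun t => riccatiBlowupTime B (ω t) + t) (Icc a b) := by
  have hbelow := riccati_lt_neg_of_lt_neg hB.le hω hineq ha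
  have hderiv : ∀ t ∈ Icc a b, HasDerivAt (fun t => riccatiBlowupTime B (ω t) + t)
      (1 / (ω t ^ 2 - B ^ 2) * ω' t + 1) t := fun t ht =>
    ((hasDerivAt_riccatiBlowupTime hB.ne' (by linarith [hbelow t ht])
      (by linarith [hbelow t ht])).comp t (hω t ht)).add (hasDerivAt_id t)
  refine antitoneOn_of_hasDerivWithinAt_nonpos (convex_Icc a b)
    (fun t ht => (hderiv t ht).continuousAt.continuousWithinAt)
    (fun t ht => (hderiv t (interior_subset ht)).hasDerivWithinAt) fun t ht => ?_
  have ht := interior_subset ht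
  have hgap : 0 < ω t ^ 2 - B ^ 2 := by nlinarith [hbelow t ht]
  have hslope : 1 / (ω t ^ 2 - B ^ 2) * ω' t ≤ -1 := by
    rw [one_div_mul_eq_div, div_le_iff₀ hgap]
    linarith [hineq t ht]
  linarith

theorem riccati_blowup_time_general
    (B t₀ t₁ : ℝ) (hB : 0 < B)
    (ω ω' : ℝ → ℝ)
    (hderiv : ∀ t ∈ Icc t₀ t₁, HasDerivAt ω (ω' t) t)
    (hineq : ∀ t ∈ Icc t₀ t₁, ω' t ≤ B ^ 2 - (ω t) ^ 2)
    (h0 : ω t₀ < -B) :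
    t₁ - t₀ < 1 / (2 * B) * Real.log ((ω t₀ - B) / (ω t₀ + B)) := by
  change t₁ - t₀ < riccatiBlowupTime B (ω t₀)
  rcases lt_or_ge t₁ t₀ with ht | ht
  · linarith [riccatiBlowupTime_pos hB h0]
  have hdecay := antitoneOn_riccatiBlowupTime_comp_add hB hderiv hineq h0
    (left_mem_Icc.2 ht) (right_mem_Icc.2 ht) ht
  have hend := riccatiBlowupTime_pos hB
    (riccati_lt_neg_of_lt_neg hB.le hderiv hineq h0 t₁ (right_mem_Icc.2 ht))
  simp only at hdecay
  linarith

/-- Riccati blow-up estimate: a subsolution of `ω' ≤ B² - ω²` on `[t₀, t₁]` with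
`ω(t₀) < -B` can only exist for a time shorter than
`(1/(2B))·log((ω(t₀) - B)/(ω(t₀) + B))`. -/
theorem riccati_blowup_time
    (B t₀ t₁ : ℝ) (hB : 0 < B) (ht : t₀ < t₁)
    (ω ω' : ℝ → ℝ)
    (hderiv : ∀ t ∈ Icc t₀ t₁, HasDerivAt ω (ω' t) t)
    (hineq : ∀ t ∈ Icc t₀ t₁, ω' t ≤ B ^ 2 - (ω t) ^ 2)
    (h0 : ω t₀ < -B) :
    t₁ - t₀ < 1 / (2 * B) * Real.log ((ω t₀ - B) / (ω t₀ + B)) :=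
  riccati_blowup_time_general B t₀ t₁ hB ω ω' hderiv hineq h0
end

section
/- Let B > 0 and let ω : ℝ → ℝ be a differentiable function satisfying ω'(t) ≤ B² − ω(t)² for all t ∈ ℝ. Then |ω(t)| ≤ B for all t ∈ ℝ. -/
/-!
If `ω(t₀) = a < -B`, then `ω' < 0` whenever `ω = a`, so `ω ≤ a` on `[t₀, ∞)`; there
`ω' ≤ -c ω²` with `c = 1 - B²/a² > 0`, so `1/ω` increases at rate at least `c` and reaches `0`
in finite time, although `ω` stays negative. The upper bound follows by applying this to the
subsolution `t ↦ -ω(-t)`.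
-/

open Set

theorem le_of_deriv_neg_at_level {ω ω' : ℝ → ℝ} (hω : ∀ t, HasDerivAt ω (ω' t) t) {t₀ a : ℝ}
    (h₀ : ω t₀ ≤ a) (hlevel : ∀ t, ω t = a → ω' t < 0) : ∀ t ≥ t₀, ω t ≤ a := fun _ ht =>
  image_le_of_deriv_right_lt_deriv_boundary (B := fun _ => a)
    (fun x _ => (hω x).continuousAt.continuousWithinAt) (fun x _ => (hω x).hasDerivWithinAt) h₀
    (fun _ => hasDerivAt_const _ a) (fun x _ => hlevel x) ⟨ht, le_rfl⟩

theorem false_of_neg_of_deriv_le_neg_mul_sq {ω ω' : ℝ → ℝ} (hω : ∀ t, HasDerivAt ω (ω' t) t)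
    {t₀ c : ℝ} (hc : 0 < c) (hneg : ∀ t ≥ t₀, ω t < 0)
    (hineq : ∀ t ≥ t₀, ω' t ≤ -c * ω t ^ 2) : False := by
  have hne : ∀ t ∈ Ici t₀, ω t ≠ 0 := fun t ht => (hneg t ht).ne
  have hmono : MonotoneOn (fun t => (ω t)⁻¹ - c * t) (Ici t₀) := by
    refine monotoneOn_of_hasDerivWithinAt_nonneg (convex_Ici t₀)
      (fun t ht => (((hω t).inv (hne t ht)).sub ((hasDerivAt_id t).const_mul c)).continuousAt
        |>.continuousWithinAt)
      (fun t ht => (((hω t).inv (hne t (interior_subset ht))).sub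
        ((hasDerivAt_id t).const_mul c)).hasDerivWithinAt) fun t ht => ?_
    rw [interior_Ici] at ht
    have hsq : 0 < ω t ^ 2 := by nlinarith [hneg t ht.le]
    rw [mul_one, sub_nonneg, le_div_iff₀ hsq]
    linarith [hineq t ht.le]
  set T := t₀ - (c * ω t₀)⁻¹
  have hT : t₀ ≤ T := by
    have : (c * ω t₀)⁻¹ < 0 := inv_lt_zero.2 (mul_neg_of_pos_of_neg hc (hneg t₀ le_rfl))
    linarith
  have key := hmono self_mem_Ici hT hT
  have hTneg : (ω T)⁻¹ < 0 := inv_lt_zero.2 (hneg T hT)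
  have : c * T = c * t₀ - (ω t₀)⁻¹ := by
    simp only [T, mul_sub, mul_inv, ← mul_assoc, mul_inv_cancel₀ hc.ne', one_mul]
  simp only at key
  linarith

theorem neg_le_of_deriv_le_sq_sub_sq {ω ω' : ℝ → ℝ} (hω : ∀ t, HasDerivAt ω (ω' t) t) {B : ℝ}
    (hB : 0 ≤ B) (hineq : ∀ t, ω' t ≤ B ^ 2 - ω t ^ 2) (t₀ : ℝ) : -B ≤ ω t₀ := by
  by_contra! ha
  set a := ω t₀
  have hBa : B ^ 2 < a ^ 2 := by nlinarith
  have ha2 : 0 < a ^ 2 := by nlinarith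
  have hle : ∀ t ≥ t₀, ω t ≤ a :=
    le_of_deriv_neg_at_level hω le_rfl fun t ht => by linarith [hineq t, ht ▸ hBa]
  refine false_of_neg_of_deriv_le_neg_mul_sq hω (c := 1 - B ^ 2 / a ^ 2) ?_
    (fun t ht => (hle t ht).trans_lt (by linarith)) fun t ht => ?_
  · rw [sub_pos, div_lt_one ha2]; exact hBa
  · have hat : a ^ 2 ≤ ω t ^ 2 := by nlinarith [hle t ht]
    have : B ^ 2 ≤ B ^ 2 / a ^ 2 * ω t ^ 2 := by
      rw [div_mul_eq_mul_div, le_div_iff₀ ha2]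
      exact mul_le_mul_of_nonneg_left hat (sq_nonneg B)
    linarith [hineq t]

theorem le_of_deriv_le_sq_sub_sq {ω ω' : ℝ → ℝ} (hω : ∀ t, HasDerivAt ω (ω' t) t) {B : ℝ}
    (hB : 0 ≤ B) (hineq : ∀ t, ω' t ≤ B ^ 2 - ω t ^ 2) (t₀ : ℝ) : ω t₀ ≤ B := by
  have hreflect : ∀ t, HasDerivAt (fun s => -ω (-s)) (ω' (-t)) t := fun t => by
    have := ((hω (-t)).comp t (hasDerivAt_neg t)).neg
    rwa [mul_neg_one, neg_neg] at this
  have := neg_le_of_deriv_le_sq_sub_sq hreflect hB (fun t => by simpa using hineq (-t)) (-t₀)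
  simp only [neg_neg] at this
  linarith

/-- A globally defined subsolution of the Riccati inequality `ω' ≤ B² - ω²`
is bounded: `|ω(t)| ≤ B` for all `t`. -/
theorem riccati_global_bound
    (B : ℝ) (hB : 0 < B) (ω ω' : ℝ → ℝ)
    (hderiv : ∀ t, HasDerivAt ω (ω' t) t)
    (hineq : ∀ t, ω' t ≤ B ^ 2 - (ω t) ^ 2) :
    ∀ t, |ω t| ≤ B := fun t =>
  abs_le.2 ⟨neg_le_of_deriv_le_sq_sub_sq hderiv hB.le hineq t,
    le_of_deriv_le_sq_sub_sq hderiv hB.le hineq t⟩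
end

section
/- Let T ∈ ℝ and let ω : (T,∞) → ℝ be a differentiable function satisfying ω'(t) = −ω(t)² for all t > T. Then 0 ≤ ω(t) ≤ 1/(t − T) for all t > T. -/
/-!
Along a solution of `ω' = -ω²` the function `ω` is antitone, and wherever it does not vanish
`1/ω` has derivative `1`, so `1/ω(b) - 1/ω(a) = b - a`. A negative value `ω(t₀)` therefore stays
negative, yet `1/ω` would reach `0` at `t₀ - 1/ω(t₀)`. A positive value `ω(t₀)` gives
`1/ω(t₀) = 1/ω(s) + (t₀ - s) > t₀ - s` for every `s ∈ (T, t₀)`; letting `s → T` yields the bound.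
-/

open Set

section Riccati

variable {ω : ℝ → ℝ}

theorem antitoneOn_of_riccati {D : Set ℝ} (hD : Convex ℝ D)
    (hω : ∀ t ∈ D, HasDerivAt ω (-(ω t) ^ 2) t) : AntitoneOn ω D :=
  antitoneOn_of_hasDerivWithinAt_nonpos hD
    (fun t ht => (hω t ht).continuousAt.continuousWithinAt)
    (fun t ht => (hω t (interior_subset ht)).hasDerivWithinAt)
    (fun _ _ => neg_nonpos.mpr (sq_nonneg _))

theorem HasDerivAt.inv_of_riccati {t : ℝ} (hω : HasDerivAt ω (-(ω t) ^ 2) t) (ht : ω t ≠ 0) :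
    HasDerivAt (fun s => (ω s)⁻¹) 1 t :=
  (hω.inv ht).congr_deriv (by rw [neg_neg, div_self (pow_ne_zero 2 ht)])

theorem inv_sub_inv_of_riccati {a b : ℝ} (hab : a ≤ b)
    (hω : ∀ t ∈ Icc a b, HasDerivAt ω (-(ω t) ^ 2) t) (hne : ∀ t ∈ Icc a b, ω t ≠ 0) :
    (ω b)⁻¹ - (ω a)⁻¹ = b - a := by
  have hconst := constant_of_has_deriv_right_zero (f := fun s => (ω s)⁻¹ - s)
    (fun t ht => ((hω t ht).continuousAt.inv₀ (hne t ht)).sub continuousAt_id |>.continuousWithinAt)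
    (fun t ht => by
      have ht' : t ∈ Icc a b := Ico_subset_Icc_self ht
      exact (((hω t ht').inv_of_riccati (hne t ht')).sub (hasDerivAt_id' t)).hasDerivWithinAt
        |>.congr_deriv (sub_self 1))
    b ⟨hab, le_rfl⟩
  linarith

theorem nonneg_of_riccati {t₀ : ℝ} (hω : ∀ t ∈ Ici t₀, HasDerivAt ω (-(ω t) ^ 2) t) :
    0 ≤ ω t₀ := by
  by_contra! hneg
  set b := t₀ - (ω t₀)⁻¹
  have hinv_neg : (ω t₀)⁻¹ < 0 := inv_lt_zero.mpr hneg
  have hb : t₀ ≤ b := by linarith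
  have hanti := antitoneOn_of_riccati (convex_Ici t₀) hω
  have hneg_on : ∀ t ∈ Icc t₀ b, ω t < 0 := fun _ ht =>
    (hanti self_mem_Ici ht.1 ht.1).trans_lt hneg
  have hblowup := inv_sub_inv_of_riccati hb (fun t ht => hω t ht.1) (fun t ht => (hneg_on t ht).ne)
  have : (ω b)⁻¹ < 0 := inv_lt_zero.mpr (hneg_on b ⟨hb, le_rfl⟩)
  linarith

theorem le_one_div_sub_of_riccati {T t₀ : ℝ} (hT : T < t₀)
    (hω : ∀ t ∈ Ioc T t₀, HasDerivAt ω (-(ω t) ^ 2) t) : ω t₀ ≤ 1 / (t₀ - T) := by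
  have hlen : 0 < t₀ - T := sub_pos.mpr hT
  rcases le_or_gt (ω t₀) 0 with hnonpos | hpos
  · exact hnonpos.trans (one_div_pos.mpr hlen).le
  have hanti := antitoneOn_of_riccati (convex_Ioc T t₀) hω
  have hstep : ∀ s ∈ Ioo T t₀, t₀ - s ≤ (ω t₀)⁻¹ := by
    intro s hs
    have hpos_on : ∀ t ∈ Icc s t₀, 0 < ω t := fun _ ht =>
      hpos.trans_le (hanti ⟨hs.1.trans_le ht.1, ht.2⟩ (right_mem_Ioc.mpr hT) ht.2)
    have hflow := inv_sub_inv_of_riccati hs.2.le (fun t ht => hω t ⟨hs.1.trans_le ht.1, ht.2⟩)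
      (fun t ht => (hpos_on t ht).ne')
    have : 0 < (ω s)⁻¹ := inv_pos.mpr (hpos_on s ⟨le_rfl, hs.2.le⟩)
    linarith
  have hlim : t₀ - T ≤ (ω t₀)⁻¹ := by
    suffices t₀ - (ω t₀)⁻¹ ≤ T by linarith
    refine le_of_forall_gt_imp_ge_of_dense fun s hs => ?_
    rcases lt_or_ge s t₀ with hst | hts
    · linarith [hstep s ⟨hs, hst⟩]
    · linarith [inv_pos.mpr hpos]
  rwa [le_one_div hpos hlen, one_div]

end Riccati

/-- A solution of the free Riccati equation `ω' = -ω²` defined on all of `(T, ∞)`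
satisfies `0 ≤ ω(t) ≤ 1/(t - T)` there. -/
theorem riccati_free_halfline_bound
    (T : ℝ) (ω : ℝ → ℝ)
    (hderiv : ∀ t ∈ Ioi T, HasDerivAt ω (-(ω t) ^ 2) t) :
    ∀ t ∈ Ioi T, 0 ≤ ω t ∧ ω t ≤ 1 / (t - T) := fun _ ht =>
  ⟨nonneg_of_riccati fun s hs => hderiv s (Ici_subset_Ioi.mpr ht hs),
    le_one_div_sub_of_riccati ht fun s hs => hderiv s hs.1⟩
end

section
/- If ω : ℝ → ℝ is a differentiable function satisfying ω'(t) = −ω(t)² for all t ∈ ℝ, then ω is identically zero. -/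
/-!
Along a solution, `1 / ω` has derivative `1` wherever `ω ≠ 0`. A solution is antitone, so if
`ω a < 0` it stays negative on `[a, ∞)` and `1 / ω` grows linearly from `1 / ω a < 0` there,
reaching `0` at time `a - 1 / ω a`, which is impossible. Hence every global solution is
nonnegative, and applying this to the solution `t ↦ -ω (-t)` shows it is also nonpositive.
-/

open Set

lemma hasDerivAt_inv_of_riccati {ω : ℝ → ℝ} {t : ℝ} (hω : HasDerivAt ω (-(ω t) ^ 2) t)
    (ht : ω t ≠ 0) : HasDerivAt (fun s => (ω s)⁻¹) 1 t := by
  refine (hω.inv ht).congr_deriv ?_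
  field_simp

lemma riccati_inv_eq_add {ω : ℝ → ℝ} {a b : ℝ} (hab : a ≤ b)
    (hderiv : ∀ t ∈ Icc a b, HasDerivAt ω (-(ω t) ^ 2) t) (hne : ∀ t ∈ Icc a b, ω t ≠ 0) :
    (ω b)⁻¹ = (ω a)⁻¹ + (b - a) := by
  have hinv : ∀ t ∈ Icc a b, HasDerivAt (fun s => (ω s)⁻¹ - s) 0 t := fun t ht =>
    ((hasDerivAt_inv_of_riccati (hderiv t ht) (hne t ht)).sub (hasDerivAt_id' t)).congr_deriv
      (sub_self 1)
  have hconst := constant_of_has_deriv_right_zero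
    (fun t ht => (hinv t ht).continuousAt.continuousWithinAt)
    (fun t ht => (hinv t (Ico_subset_Icc_self ht)).hasDerivWithinAt) b ⟨hab, le_rfl⟩
  linarith

lemma riccati_antitone {ω : ℝ → ℝ} (hderiv : ∀ t, HasDerivAt ω (-(ω t) ^ 2) t) :
    Antitone ω :=
  antitone_of_hasDerivAt_nonpos hderiv fun _ => neg_nonpos.2 (sq_nonneg _)

lemma riccati_nonneg {ω : ℝ → ℝ} (hderiv : ∀ t, HasDerivAt ω (-(ω t) ^ 2) t) (a : ℝ) :
    0 ≤ ω a := by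
  by_contra! hneg
  have hlt : ∀ t, a ≤ t → ω t < 0 := fun t ht => (riccati_antitone hderiv ht).trans_lt hneg
  set b := a - (ω a)⁻¹
  have hab : a ≤ b := by linarith [inv_lt_zero.2 hneg]
  have hb : (ω b)⁻¹ = 0 := by
    rw [riccati_inv_eq_add hab (fun t _ => hderiv t) (fun t ht => (hlt t ht.1).ne)]
    ring
  exact (hlt b hab).ne (inv_eq_zero.1 hb)

lemma riccati_neg_comp_neg {ω : ℝ → ℝ} (hderiv : ∀ t, HasDerivAt ω (-(ω t) ^ 2) t) (t : ℝ) :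
    HasDerivAt (fun s => -ω (-s)) (-(-ω (-t)) ^ 2) t := by
  refine ((hderiv (-t)).comp t (hasDerivAt_neg t)).neg.congr_deriv ?_
  ring

/-- The only solution of the Riccati equation `ω' = -ω²` defined on all of `ℝ`
is the zero function. -/
theorem riccati_global_trivial
    (ω : ℝ → ℝ) (hderiv : ∀ t, HasDerivAt ω (-(ω t) ^ 2) t) :
    ∀ t, ω t = 0 := by
  intro t
  have hle : 0 ≤ -ω (-(-t)) := riccati_nonneg (riccati_neg_comp_neg hderiv) (-t)
  rw [neg_neg] at hle
  linarith [riccati_nonneg hderiv t]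
end

section
/- Let Φ : ℝ → ℝ and Ψ : ℝ → ℝ be smooth compactly supported functions, and define W : ℝ × ℝ → ℝ by W(u,t) = −e^{−2t}·( Ψ'(t)·Φ(u) + (1/2)·Ψ(t)²·Φ'(u)² ). Then every solution u : ℝ → ℝ of the first-order equation u'(t) = Φ'(u(t))·Ψ(t) satisfies the Newton equation u''(t) = −e^{2t}·∂W/∂u(u(t),t). -/
/-- Example: for smooth compactly supported `Φ, Ψ` and
`W(u,t) = -e^{-2t}(Ψ'(t)Φ(u) + ½Ψ(t)²Φ'(u)²)`, every solution of the first-order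
equation `u' = Φ'(u)Ψ(t)` satisfies the Newton equation `ü = -e^{2t}W'_u(u,t)`. -/
theorem first_order_flow_solves_newton
    (Φ Ψ : ℝ → ℝ) (hΦ : ContDiff ℝ (⊤ : ℕ∞) Φ) (hΨ : ContDiff ℝ (⊤ : ℕ∞) Ψ)
    (hΦc : HasCompactSupport Φ) (hΨc : HasCompactSupport Ψ)
    (W : ℝ × ℝ → ℝ)
    (hW : ∀ u t : ℝ, W (u, t) =
      -Real.exp (-2 * t) * (deriv Ψ t * Φ u + 1 / 2 * (Ψ t) ^ 2 * (deriv Φ u) ^ 2))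
    (u : ℝ → ℝ) (hu : ∀ t, HasDerivAt u (deriv Φ (u t) * Ψ t) t) :
    ∀ t, deriv (deriv u) t = -Real.exp (2 * t) * deriv (fun v => W (v, t)) (u t) := by
  intro t
  have hΦ' : ContDiff ℝ ((⊤:ℕ∞):WithTop ℕ∞) (deriv Φ) := (contDiff_infty_iff_deriv.mp (hΦ.of_le (by simp))).2
  have hΨ' : ContDiff ℝ ((⊤:ℕ∞):WithTop ℕ∞) (deriv Ψ) := (contDiff_infty_iff_deriv.mp (hΨ.of_le (by simp))).2
  -- spatial derivative of W
  have hWx : HasDerivAt (fun v => W (v, t))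
      (-Real.exp (-2 * t) * (deriv Ψ t * deriv Φ (u t) +
        1 / 2 * (Ψ t) ^ 2 * (2 * deriv Φ (u t) * deriv (deriv Φ) (u t)))) (u t) := by
    have h1 : HasDerivAt Φ (deriv Φ (u t)) (u t) :=
      (hΦ.differentiable (by simp) (u t)).hasDerivAt
    have h2 : HasDerivAt (deriv Φ) (deriv (deriv Φ) (u t)) (u t) :=
      (hΦ'.differentiable (by norm_num) (u t)).hasDerivAt
    have h3 : HasDerivAt (fun v => deriv Ψ t * Φ v + 1 / 2 * (Ψ t) ^ 2 * (deriv Φ v) ^ 2)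
        (deriv Ψ t * deriv Φ (u t) +
          1 / 2 * (Ψ t) ^ 2 * (2 * deriv Φ (u t) ^ 1 * deriv (deriv Φ) (u t))) (u t) :=
      (h1.const_mul _).add (((h2.pow 2).const_mul _))
    have := h3.const_mul (-Real.exp (-2 * t))
    simpa [hW, mul_comm, mul_assoc, mul_left_comm] using this
  have hderivu : deriv u = fun s => deriv Φ (u s) * Ψ s := funext fun s => (hu s).deriv
  have h2 : HasDerivAt (fun s => deriv Φ (u s) * Ψ s)
      ((deriv (deriv Φ) (u t) * (deriv Φ (u t) * Ψ t)) * Ψ t +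
        deriv Φ (u t) * deriv Ψ t) t := by
    have hc : HasDerivAt (fun s => deriv Φ (u s))
        (deriv (deriv Φ) (u t) * (deriv Φ (u t) * Ψ t)) t :=
      ((hΦ'.differentiable (by norm_num) (u t)).hasDerivAt).comp t (hu t)
    exact hc.mul (hΨ.differentiable (by simp) t).hasDerivAt
  have key : deriv (deriv u) t =
      (deriv (deriv Φ) (u t) * (deriv Φ (u t) * Ψ t)) * Ψ t + deriv Φ (u t) * deriv Ψ t := by
    rw [hderivu]; exact h2.deriv
  rw [key, hWx.deriv]
  have hexp : Real.exp (2 * t) * Real.exp (-2 * t) = 1 := by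
    rw [← Real.exp_add]; norm_num
  linear_combination (-(deriv Ψ t * deriv Φ (u t) +
    Ψ t ^ 2 * deriv Φ (u t) * deriv (deriv Φ) (u t))) * hexp
end
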